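/- arXiv:1604.08657 — 9 statements merged into one kernel-verified Lean document; each statement's English description precedes it below -/
import Mathlib

section
/- Let X be a finite set of points in the plane in general position (no three collinear) such that every 4-element subset of X is in convex position. Then X is in convex position (i.e., every point of X is a vertex of the convex hull of X). -/
/-! By Carathéodory's theorem, a point `p` of `X` lying in the convex hull of the other points
lies in the convex hull of at most three of them. One or two such points would make `p` equal to
one of them or collinear with two of them, contradicting general position; three such points
together with `p` form a 4-element subset of `X` that is not in convex position. -/

/-- Signed area determinant: positive iff `c` is to the left of the directed line `a → b`. -/
def det2 (a b c : ℝ × ℝ) : ℝ :=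
  (b.1 - a.1) * (c.2 - a.2) - (b.2 - a.2) * (c.1 - a.1)

/-- A planar point set is in general position if no three of its points are collinear. -/
def GenPos (S : Set (ℝ × ℝ)) : Prop :=
  ∀ p ∈ S, ∀ q ∈ S, ∀ r ∈ S, p ≠ q → p ≠ r → q ≠ r →
    ¬ Collinear ℝ ({p, q, r} : Set (ℝ × ℝ))

/-- A planar point set is in convex position if every point is a vertex of the convex hull,
i.e. no point lies in the convex hull of the others. -/
def ConvexPos (S : Set (ℝ × ℝ)) : Prop :=
  ∀ p ∈ S, p ∉ convexHull ℝ (S \ {p})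

open Finset

theorem exists_finset_card_le_finrank_succ_of_mem_convexHull {𝕜 E : Type*} [Field 𝕜]
    [LinearOrder 𝕜] [IsStrictOrderedRing 𝕜] [AddCommGroup E] [Module 𝕜 E]
    [FiniteDimensional 𝕜 E] {s : Set E} {x : E} (hx : x ∈ convexHull 𝕜 s) :
    ∃ t : Finset E, ↑t ⊆ s ∧ #t ≤ Module.finrank 𝕜 E + 1 ∧ x ∈ convexHull 𝕜 (t : Set E) := by
  rw [convexHull_eq_union] at hx
  simp only [Set.mem_iUnion] at hx
  obtain ⟨t, hts, hti, hxt⟩ := hx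
  refine ⟨t, hts, ?_, hxt⟩
  have hcard := hti.card_le_finrank_succ
  rw [Subtype.range_coe_subtype, Fintype.card_coe] at hcard
  exact hcard.trans (Nat.add_le_add_right (Submodule.finrank_le _) 1)

theorem GenPos.notMem_segment {S : Set (ℝ × ℝ)} (hS : GenPos S) {p a b : ℝ × ℝ} (hp : p ∈ S)
    (ha : a ∈ S) (hb : b ∈ S) (hpa : p ≠ a) (hpb : p ≠ b) : p ∉ segment ℝ a b := by
  intro hpab
  rcases eq_or_ne a b with rfl | hab
  · exact hpa (by simpa using hpab)
  · refine hS p hp a ha b hb hpa hpb hab (collinear_insert_of_mem_affineSpan_pair ?_)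
    rw [← convexHull_pair] at hpab
    exact convexHull_subset_affineSpan _ hpab

theorem GenPos.notMem_convexHull_of_card_le_two {S : Set (ℝ × ℝ)} (hS : GenPos S) {p : ℝ × ℝ}
    (hp : p ∈ S) {t : Finset (ℝ × ℝ)} (htS : ↑t ⊆ S \ {p}) (ht : #t ≤ 2) :
    p ∉ convexHull ℝ (t : Set (ℝ × ℝ)) := by
  intro hpt
  obtain ⟨a, hat, b, hbt, htab⟩ : ∃ a ∈ t, ∃ b ∈ t, t = {a, b} := by
    have ht0 : t.Nonempty := by simpa using convexHull_nonempty_iff.mp ⟨p, hpt⟩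
    rcases (show #t = 1 ∨ #t = 2 by have := ht0.card_pos; omega) with h1 | h2
    · obtain ⟨a, rfl⟩ := card_eq_one.mp h1
      exact ⟨a, mem_singleton_self a, a, mem_singleton_self a, by simp⟩
    · obtain ⟨a, b, -, rfl⟩ := card_eq_two.mp h2
      exact ⟨a, by simp, b, by simp, rfl⟩
  obtain ⟨haS, hpa⟩ := htS hat
  obtain ⟨hbS, hpb⟩ := htS hbt
  rw [htab, coe_pair, convexHull_pair] at hpt
  exact hS.notMem_segment hp haS hbS (Ne.symm hpa) (Ne.symm hpb) hpt

/-- If every 4 points of a finite planar point set in general position are in convex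
position, then the whole set is in convex position. -/
theorem stmt_0 (X : Finset (ℝ × ℝ)) (hgp : GenPos (X : Set (ℝ × ℝ)))
    (h4 : ∀ Y ⊆ X, Y.card = 4 → ConvexPos (Y : Set (ℝ × ℝ))) :
    ConvexPos (X : Set (ℝ × ℝ)) := by
  intro p hpX hp
  obtain ⟨t, htX, hcard, hpt⟩ := exists_finset_card_le_finrank_succ_of_mem_convexHull hp
  rw [Module.finrank_prod, Module.finrank_self] at hcard
  rcases (show #t ≤ 2 ∨ #t = 3 by omega) with ht | ht
  · exact hgp.notMem_convexHull_of_card_le_two hpX htX ht hpt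
  have hpt' : p ∉ t := fun h ↦ (htX h).2 rfl
  refine h4 (insert p t) (insert_subset hpX fun x hx ↦ (htX hx).1)
    (by rw [card_insert_of_notMem hpt', ht]) p (mem_insert_self p t) ?_
  rwa [coe_insert, Set.insert_sdiff_self_of_notMem (mod_cast hpt')]
end

section
/- For every integer n ≥ 3, any set of C(2n-4, n-2) + 1 points in the plane in general position contains n points in convex position. -/
open List Finset

lemma det2_cyclic (a b c : ℝ × ℝ) : det2 b c a = det2 a b c := by
  unfold det2; ring

lemma det2_swap (a b c : ℝ × ℝ) : det2 a c b = -det2 a b c := by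
  unfold det2; ring

lemma convex_setOf_det2_nonpos (u v : ℝ × ℝ) : Convex ℝ {x | det2 u v x ≤ 0} := by
  intro x hx y hy a b ha hb hab
  have : det2 u v (a • x + b • y) = a * det2 u v x + b * det2 u v y := by
    simp only [det2, Prod.fst_add, Prod.snd_add, Prod.smul_fst, Prod.smul_snd, smul_eq_mul]
    linear_combination ((v.1 - u.1) * u.2 - (v.2 - u.2) * u.1) * hab
  simp only [Set.mem_ofPred_eq, this] at hx hy ⊢
  nlinarith [mul_nonneg ha (neg_nonneg.2 hx), mul_nonneg hb (neg_nonneg.2 hy)]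

lemma collinear_of_det2_eq_zero {p q r : ℝ × ℝ} (hpq : p ≠ q) (h : det2 p q r = 0) :
    Collinear ℝ ({p, q, r} : Set (ℝ × ℝ)) := by
  have hsq : (q.1 - p.1) ^ 2 + (q.2 - p.2) ^ 2 ≠ 0 := by
    intro h0
    exact hpq (Prod.ext (by nlinarith [sq_nonneg (q.1 - p.1), sq_nonneg (q.2 - p.2)])
      (by nlinarith [sq_nonneg (q.1 - p.1), sq_nonneg (q.2 - p.2)]))
  -- the coefficient of the orthogonal projection of `r - p` onto `q - p`
  set k := ((r.1 - p.1) * (q.1 - p.1) + (r.2 - p.2) * (q.2 - p.2)) /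
    ((q.1 - p.1) ^ 2 + (q.2 - p.2) ^ 2)
  have hr : AffineMap.lineMap p q k = r := by
    unfold det2 at h
    ext <;> simp [AffineMap.lineMap_apply_module', k] <;> field_simp
    · linear_combination (q.2 - p.2) * h
    · linear_combination -(q.1 - p.1) * h
  have := collinear_insert_of_mem_affineSpan_pair (hr ▸ AffineMap.lineMap_mem_affineSpan_pair k p q)
  rwa [Set.insert_comm, Set.pair_comm] at this

lemma GenPos.det2_ne_zero {S : Set (ℝ × ℝ)} (hS : GenPos S) {p q r : ℝ × ℝ} (hp : p ∈ S)
    (hq : q ∈ S) (hr : r ∈ S) (hpq : p ≠ q) (hpr : p ≠ r) (hqr : q ≠ r) : det2 p q r ≠ 0 :=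
  fun h => hS p hp q hq r hr hpq hpr hqr (collinear_of_det2_eq_zero hpq h)

lemma GenPos.mono {S T : Set (ℝ × ℝ)} (hS : GenPos S) (hTS : T ⊆ S) : GenPos T :=
  fun p hp q hq r hr => hS p (hTS hp) q (hTS hq) r (hTS hr)

lemma exists_linearMap_injOn {𝕜 : Type*} [Field 𝕜] [Infinite 𝕜] (P : Finset (𝕜 × 𝕜)) :
    ∃ φ : 𝕜 × 𝕜 →ₗ[𝕜] 𝕜, Set.InjOn φ P := by
  classical
  obtain ⟨t, ht⟩ := Infinite.exists_notMem_finset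
    ((P ×ˢ P).image fun pq => (pq.2.1 - pq.1.1) / (pq.1.2 - pq.2.2))
  refine ⟨LinearMap.fst 𝕜 𝕜 𝕜 + t • LinearMap.snd 𝕜 𝕜 𝕜, fun p hp q hq hpq => ?_⟩
  simp only [LinearMap.add_apply, LinearMap.smul_apply, LinearMap.fst_apply,
    LinearMap.snd_apply, smul_eq_mul] at hpq
  by_cases h2 : p.2 = q.2
  · exact Prod.ext (by rw [h2] at hpq; linear_combination hpq) h2
  · refine absurd (Finset.mem_image.2 ⟨(p, q), Finset.mem_product.2 ⟨hp, hq⟩, ?_⟩) ht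
    have : p.2 - q.2 ≠ 0 := sub_ne_zero.2 h2
    field_simp
    linear_combination -hpq

lemma LinearMap.apply_eq_fst_mul_add_snd_mul {R : Type*} [CommSemiring R] (φ : R × R →ₗ[R] R)
    (p : R × R) : φ p = p.1 * φ (1, 0) + p.2 * φ (0, 1) := by
  obtain ⟨x, y⟩ := p
  rw [show ((x, y) : R × R) = x • (1, 0) + y • (0, 1) by simp, map_add, map_smul, map_smul]
  simp

section
variable (φ : ℝ × ℝ →ₗ[ℝ] ℝ)

lemma det2_mul_sub_eq_abd (a b c d : ℝ × ℝ) :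
    det2 a b d * (φ c - φ b) = det2 a b c * (φ d - φ b) + det2 b c d * (φ b - φ a) := by
  rw [φ.apply_eq_fst_mul_add_snd_mul a, φ.apply_eq_fst_mul_add_snd_mul b,
    φ.apply_eq_fst_mul_add_snd_mul c, φ.apply_eq_fst_mul_add_snd_mul d]
  unfold det2; ring

lemma det2_mul_sub_eq_acd (a b c d : ℝ × ℝ) :
    det2 a c d * (φ c - φ b) = det2 a b c * (φ d - φ c) + det2 b c d * (φ c - φ a) := by
  rw [φ.apply_eq_fst_mul_add_snd_mul a, φ.apply_eq_fst_mul_add_snd_mul b,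
    φ.apply_eq_fst_mul_add_snd_mul c, φ.apply_eq_fst_mul_add_snd_mul d]
  unfold det2; ring

variable {φ} {a b c d : ℝ × ℝ}

lemma det2_neg_abd (hab : φ a < φ b) (hbc : φ b < φ c) (hcd : φ c < φ d)
    (habc : det2 a b c < 0) (hbcd : det2 b c d < 0) : det2 a b d < 0 := by
  have := det2_mul_sub_eq_abd φ a b c d
  nlinarith [mul_neg_of_neg_of_pos habc (sub_pos.2 (hbc.trans hcd)),
    mul_neg_of_neg_of_pos hbcd (sub_pos.2 hab)]

lemma det2_neg_acd (hab : φ a < φ b) (hbc : φ b < φ c) (hcd : φ c < φ d)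
    (habc : det2 a b c < 0) (hbcd : det2 b c d < 0) : det2 a c d < 0 := by
  have := det2_mul_sub_eq_acd φ a b c d
  nlinarith [mul_neg_of_neg_of_pos habc (sub_pos.2 hcd),
    mul_neg_of_neg_of_pos hbcd (sub_pos.2 (hab.trans hbc))]

end

-- For `φ` the first coordinate a cap turns clockwise; a cap for `-φ` is a cup listed from right
-- to left.
def IsCap (φ : ℝ × ℝ →ₗ[ℝ] ℝ) (l : List (ℝ × ℝ)) : Prop :=
  l.Pairwise (fun p q => φ p < φ q) ∧ ∀ p q r, [p, q, r] <+ l → det2 p q r < 0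

def HasCap (φ : ℝ × ℝ →ₗ[ℝ] ℝ) (P : Finset (ℝ × ℝ)) (k : ℕ) : Prop :=
  ∃ l, IsCap φ l ∧ (∀ x ∈ l, x ∈ P) ∧ l.length = k

section
variable {φ : ℝ × ℝ →ₗ[ℝ] ℝ}

lemma isCap_pair {p q : ℝ × ℝ} (h : φ p < φ q) : IsCap φ [p, q] :=
  ⟨by simpa using h, fun _ _ _ hs => absurd hs.length_le (by simp)⟩

lemma IsCap.cons {p q r : ℝ × ℝ} {m : List (ℝ × ℝ)} (hK : IsCap φ (q :: r :: m))
    (hpq : φ p < φ q) (hpqr : det2 p q r < 0) : IsCap φ (p :: q :: r :: m) := by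
  obtain ⟨hsort, hdet⟩ := hK
  obtain ⟨hq, hrm⟩ := pairwise_cons.1 hsort
  have hpqy : ∀ y ∈ r :: m, det2 p q y < 0 := by
    intro y hy
    rcases mem_cons.1 hy with rfl | hy
    · exact hpqr
    · exact det2_neg_abd hpq (hq r mem_cons_self) ((pairwise_cons.1 hrm).1 y hy)
        hpqr (hdet q r y (by simpa using hy))
  refine ⟨pairwise_cons.2 ⟨fun y hy => ?_, hsort⟩, fun x y z hs => ?_⟩
  · rcases mem_cons.1 hy with rfl | hy
    exacts [hpq, hpq.trans (hq y hy)]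
  rcases sublist_cons_iff.1 hs with hs | ⟨l, hxl, hs⟩
  · exact hdet x y z hs
  obtain ⟨rfl, rfl⟩ := cons_eq_cons.1 hxl
  rcases sublist_cons_iff.1 hs with hs | ⟨l, hyl, hs⟩
  · have hy : y ∈ r :: m := hs.subset mem_cons_self
    have hz : z ∈ r :: m := hs.subset (by simp)
    exact det2_neg_acd hpq (hq y hy) (by simpa using hrm.sublist hs) (hpqy y hy)
      (hdet q y z (hs.cons_cons q))
  · obtain ⟨rfl, rfl⟩ := cons_eq_cons.1 hyl
    exact hpqy z (singleton_sublist.1 hs)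

lemma IsCap.notMem_convexHull {l₁ l₂ : List (ℝ × ℝ)} {p : ℝ × ℝ}
    (hl : IsCap φ (l₁ ++ p :: l₂)) : p ∉ convexHull ℝ {x | x ∈ l₁ ∨ x ∈ l₂} := by
  obtain ⟨hsort, hdet⟩ := hl
  obtain ⟨h₁, h₂, h₁₂⟩ := pairwise_append.1 hsort
  refine fun hp => ?_
  rcases eq_nil_or_concat' l₁ with rfl | ⟨L, u, rfl⟩
  · have hC : {x | x ∈ [] ∨ x ∈ l₂} ⊆ {x | φ p < φ x} := by
      simpa using (pairwise_cons.1 h₂).1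
    exact lt_irrefl (φ p) (convexHull_min hC (convex_halfSpace_gt φ.isLinear _) hp)
  rcases l₂ with _ | ⟨v, m⟩
  · have hC : {x | x ∈ L ++ [u] ∨ x ∈ []} ⊆ {x | φ x < φ p} := fun x hx =>
      h₁₂ x (by simpa using hx) p mem_cons_self
    exact lt_irrefl (φ p) (convexHull_min hC (convex_halfSpace_lt φ.isLinear _) hp)
  have hC : {x | x ∈ L ++ [u] ∨ x ∈ v :: m} ⊆ {x | det2 u v x ≤ 0} := by
    rintro x (hx | hx) <;> show det2 u v x ≤ 0
    · rcases mem_append.1 hx with hx | hx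
      · rw [det2_cyclic]
        refine (hdet x u v ?_).le
        simpa using (singleton_sublist.2 hx).append
          ((((nil_sublist m).cons_cons v).cons p).cons_cons u)
      · obtain rfl := List.mem_singleton.1 hx
        exact (by unfold det2; ring : det2 x v x = 0).le
    · rcases mem_cons.1 hx with rfl | hx
      · exact (by unfold det2; ring : det2 u x x = 0).le
      · refine (hdet u v x ?_).le
        simpa using ((((singleton_sublist.2 hx).cons_cons v).cons p).cons_cons u).trans
          (sublist_append_right L _)
  have hupv : det2 u p v < 0 := hdet u p v (by simp)
  have : det2 u v p ≤ 0 := convexHull_min hC (convex_setOf_det2_nonpos u v) hp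
  linarith [det2_swap u p v]

lemma IsCap.convexPos {l : List (ℝ × ℝ)} (hl : IsCap φ l) :
    ConvexPos (l.toFinset : Set (ℝ × ℝ)) := by
  intro p hp
  obtain ⟨l₁, l₂, rfl⟩ := append_of_mem (mem_toFinset.1 hp)
  refine fun h => hl.notMem_convexHull (convexHull_mono (fun x hx => ?_) h)
  obtain ⟨hx, hxp⟩ := hx
  simp only [coe_toFinset, mem_append, List.mem_cons, Set.mem_ofPred_eq, Set.mem_singleton_iff]
    at hx hxp ⊢
  tauto

lemma HasCap.exists_convexPos {P : Finset (ℝ × ℝ)} {k : ℕ} (h : HasCap φ P k) :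
    ∃ S ⊆ P, S.card = k ∧ ConvexPos (S : Set (ℝ × ℝ)) := by
  obtain ⟨l, hl, hlP, rfl⟩ := h
  have hnodup : l.Nodup := hl.1.imp fun h => ne_of_apply_ne φ h.ne
  exact ⟨l.toFinset, fun x hx => hlP x (mem_toFinset.1 hx), toFinset_card_of_nodup hnodup,
    hl.convexPos⟩

lemma HasCap.mono {P Q : Finset (ℝ × ℝ)} {k : ℕ} (h : HasCap φ P k) (hPQ : P ⊆ Q) :
    HasCap φ Q k :=
  let ⟨l, hl, hlP, hlen⟩ := h
  ⟨l, hl, fun x hx => hPQ (hlP x hx), hlen⟩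

lemma hasCap_two {P : Finset (ℝ × ℝ)} (hφ : Set.InjOn φ P) (hP : 1 < P.card) :
    HasCap φ P 2 := by
  obtain ⟨p, hp, q, hq, hpq⟩ := one_lt_card.1 hP
  rcases lt_or_gt_of_ne (hφ.ne hp hq hpq) with h | h
  · exact ⟨[p, q], isCap_pair h, by simp [hp, hq], rfl⟩
  · exact ⟨[q, p], isCap_pair h, by simp [hp, hq], rfl⟩

lemma isCap_neg_cons_or_isCap_cons {S : Set (ℝ × ℝ)} (hS : GenPos S) {p q r : ℝ × ℝ}
    {m m' : List (ℝ × ℝ)} (hp : p ∈ S) (hq : q ∈ S) (hr : r ∈ S)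
    (hcup : IsCap (-φ) (q :: p :: m')) (hcap : IsCap φ (q :: r :: m)) :
    IsCap (-φ) (r :: q :: p :: m') ∨ IsCap φ (p :: q :: r :: m) := by
  have hpq : φ p < φ q := by simpa using (pairwise_cons.1 hcup.1).1 p mem_cons_self
  have hqr : φ q < φ r := (pairwise_cons.1 hcap.1).1 r mem_cons_self
  have hdet := hS.det2_ne_zero hp hq hr (ne_of_apply_ne φ hpq.ne)
    (ne_of_apply_ne φ (hpq.trans hqr).ne) (ne_of_apply_ne φ hqr.ne)
  rcases lt_or_gt_of_ne hdet with hneg | hpos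
  · exact Or.inr (hcap.cons hpq hneg)
  · refine Or.inl (hcup.cons (by simpa using hqr) ?_)
    have : det2 r q p = -det2 p q r := by unfold det2; ring
    linarith

end

open Classical in
noncomputable def capHeads (φ : ℝ × ℝ →ₗ[ℝ] ℝ) (P : Finset (ℝ × ℝ)) (k : ℕ) : Finset (ℝ × ℝ) :=
  P.filter fun q => ∃ l, IsCap φ (q :: l) ∧ (∀ x ∈ q :: l, x ∈ P) ∧ (q :: l).length = k

section
variable {φ : ℝ × ℝ →ₗ[ℝ] ℝ} {P : Finset (ℝ × ℝ)}

lemma mem_capHeads {k : ℕ} {q : ℝ × ℝ} : q ∈ capHeads φ P k ↔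
    q ∈ P ∧ ∃ l, IsCap φ (q :: l) ∧ (∀ x ∈ q :: l, x ∈ P) ∧ (q :: l).length = k := by
  simp only [capHeads, Finset.mem_filter]

lemma capHeads_subset (k : ℕ) : capHeads φ P k ⊆ P :=
  fun _ hq => (mem_capHeads.1 hq).1

lemma not_hasCap_sdiff_capHeads (k : ℕ) : ¬ HasCap φ (P \ capHeads φ P (k + 1)) (k + 1) := by
  rintro ⟨_ | ⟨q, l⟩, hl, hlP, hlen⟩
  · simp at hlen
  · have hq := mem_sdiff.1 (hlP q mem_cons_self)
    exact hq.2 (mem_capHeads.2 ⟨hq.1, l, hl, fun x hx => (mem_sdiff.1 (hlP x hx)).1, hlen⟩)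

lemma hasCap_of_hasCap_capHeads (hP : GenPos (P : Set (ℝ × ℝ))) {a b : ℕ}
    (h : HasCap φ (capHeads (-φ) P (a + 2)) (b + 2)) :
    HasCap (-φ) P (a + 3) ∨ HasCap φ P (b + 3) := by
  obtain ⟨_ | ⟨q, _ | ⟨r, m⟩⟩, hcap, hcapE, hlen⟩ := h
  · simp at hlen
  · simp at hlen
  have hcapP : ∀ x ∈ q :: r :: m, x ∈ P := fun x hx => capHeads_subset _ (hcapE x hx)
  obtain ⟨hqP, _ | ⟨p, m'⟩, hcup, hcupP, hlen'⟩ := mem_capHeads.1 (hcapE q mem_cons_self)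
  · simp at hlen'
  have hpP : p ∈ P := hcupP p (by simp)
  have hrP : r ∈ P := hcapP r (by simp)
  rcases isCap_neg_cons_or_isCap_cons hP hpP hqP hrP hcup hcap with h | h
  · exact Or.inl ⟨_, h, forall_mem_cons.2 ⟨hrP, hcupP⟩, by simpa using hlen'⟩
  · exact Or.inr ⟨_, h, forall_mem_cons.2 ⟨hpP, hcapP⟩, by simpa using hlen⟩

end

theorem hasCap_neg_or_hasCap (φ : ℝ × ℝ →ₗ[ℝ] ℝ) :
    ∀ (a b : ℕ) (P : Finset (ℝ × ℝ)), Set.InjOn φ P → GenPos (P : Set (ℝ × ℝ)) →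
      (a + b).choose a < P.card → HasCap (-φ) P (a + 2) ∨ HasCap φ P (b + 2)
  | 0, b, P, hφ, _, hP => Or.inl (hasCap_two (fun _ hx _ hy h => hφ hx hy (neg_inj.1 h))
      (by simpa using hP))
  | a + 1, 0, P, hφ, _, hP => Or.inr (hasCap_two hφ (by simpa using hP))
  | a + 1, b + 1, P, hφ, hgp, hP => by
    set E := capHeads (-φ) P (a + 2)
    have hEP : E ⊆ P := capHeads_subset _
    by_cases hPE : (a + (b + 1)).choose a < (P \ E).card
    · rcases hasCap_neg_or_hasCap φ a (b + 1) (P \ E) (hφ.mono (by simp)) (hgp.mono (by simp))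
        hPE with h | h
      · exact absurd h (not_hasCap_sdiff_capHeads _)
      · exact Or.inr (h.mono sdiff_subset)
    have hE : (a + 1 + b).choose (a + 1) < E.card := by
      have := card_sdiff_of_subset hEP
      have := Nat.choose_succ_succ' (a + b + 1) a
      rw [show a + 1 + (b + 1) = a + b + 1 + 1 by omega] at hP
      rw [show a + (b + 1) = a + b + 1 by omega] at hPE
      rw [show a + 1 + b = a + b + 1 by omega]
      omega
    rcases hasCap_neg_or_hasCap φ (a + 1) b E (hφ.mono (by simpa using hEP))
      (hgp.mono (by simpa using hEP)) hE with h | h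
    · exact Or.inl (h.mono hEP)
    · exact hasCap_of_hasCap_capHeads hgp h

/-- Erdős–Szekeres: any C(2n-4, n-2) + 1 points in general position contain
n points in convex position. -/
theorem stmt_1 (n : ℕ) (hn : 3 ≤ n) (P : Finset (ℝ × ℝ))
    (hcard : P.card = Nat.choose (2 * n - 4) (n - 2) + 1)
    (hgp : GenPos (P : Set (ℝ × ℝ))) :
    ∃ S ⊆ P, S.card = n ∧ ConvexPos (S : Set (ℝ × ℝ)) := by
  obtain ⟨φ, hφ⟩ := exists_linearMap_injOn P
  obtain ⟨k, rfl⟩ : ∃ k, n = k + 2 := ⟨n - 2, by omega⟩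
  have hP : (k + k).choose k < P.card := by
    rw [hcard, show 2 * (k + 2) - 4 = k + k by omega, Nat.add_sub_cancel]
    exact Nat.lt_succ_self _
  rcases hasCap_neg_or_hasCap φ k k P hφ hgp hP with h | h
  exacts [h.exists_convexPos, h.exists_convexPos]
end

section
/- Let N = C(k+ℓ-4, k-2) + 1 and let c be a 2-coloring (red/blue) of the 3-element subsets of {1, ..., N} that is transitive: for i1 < i2 < i3 < i4, if {i1,i2,i3} and {i2,i3,i4} are both red (resp. both blue) then {i1,i2,i4} and {i1,i3,i4} are red (resp. blue). Then there exists a k-element subset all of whose triples are red, or an ℓ-element subset all of whose triples are blue. -/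
/-!
The cups–caps argument of Erdős–Szekeres. By transitivity, a monochromatic set `S` with largest
elements `a < p` stays monochromatic when an element `q > p` is added, provided `{a, p, q}` has
its colour (and dually below `min S`). Let `E ⊆ A` be the set of maxima of red `(k-1)`-sets in
`A`. By induction `A \ E`, which has no red `(k-1)`-set, is small unless it has a blue `ℓ`-set;
so `E` is large and contains a red `k`-set or a blue `(ℓ-1)`-set `C`. In the latter case
`p = min C` is the top of a red `(k-1)`-set `U`, and with `a` the predecessor of `p` in `U` and
`q` its successor in `C`, the colour of `{a, p, q}` makes `U ∪ {q}` red or `C ∪ {a}` blue. The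
counts match by Pascal's rule.
-/

open Finset

namespace TripleColoring

variable {α : Type*}

def IsMonochromatic (c : Finset α → Bool) (b : Bool) (S : Finset α) : Prop :=
  ∀ T ⊆ S, #T = 3 → c T = b

theorem isMonochromatic_of_card_le_two {c : Finset α → Bool} {b : Bool} {S : Finset α}
    (hS : #S ≤ 2) : IsMonochromatic c b S :=
  fun _ hT hT3 => absurd (card_le_card hT) (by omega)

theorem exists_isMonochromatic_of_one_lt_card (c : Finset α → Bool) (b : Bool) {A : Finset α}
    (hA : 1 < #A) : ∃ S ⊆ A, #S = 2 ∧ IsMonochromatic c b S :=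
  let ⟨S, hSA, hS⟩ := exists_subset_card_eq hA
  ⟨S, hSA, hS, isMonochromatic_of_card_le_two hS.le⟩

variable [LinearOrder α]

def IsTransitiveOn (c : Finset α → Bool) (A : Finset α) : Prop :=
  ∀ ⦃i j k l⦄, i ∈ A → j ∈ A → k ∈ A → l ∈ A → i < j → j < k → k < l →
    c {i, j, k} = c {j, k, l} → c {i, j, l} = c {i, j, k} ∧ c {i, k, l} = c {i, j, k}

variable {c : Finset α → Bool} {A B S : Finset α} {b : Bool}

theorem IsMonochromatic.apply_of_lt {x y z : α} (hS : IsMonochromatic c b S) (hx : x ∈ S)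
    (hy : y ∈ S) (hz : z ∈ S) (hxy : x < y) (hyz : y < z) : c {x, y, z} = b :=
  hS _ (by simp [insert_subset_iff, hx, hy, hz])
    (card_eq_three.mpr ⟨x, y, z, hxy.ne, (hxy.trans hyz).ne, hyz.ne, rfl⟩)

theorem IsTransitiveOn.mono (hc : IsTransitiveOn c A) (hBA : B ⊆ A) : IsTransitiveOn c B :=
  fun _ _ _ _ hi hj hk hl => hc (hBA hi) (hBA hj) (hBA hk) (hBA hl)

theorem triple_comm (x y z : α) : ({x, y, z} : Finset α) = {z, y, x} := by
  ext; simp only [mem_insert, mem_singleton]; tauto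

-- Reversing the order maps the transitivity condition to itself.
open OrderDual in
theorem IsTransitiveOn.dual (hc : IsTransitiveOn c A) : IsTransitiveOn (α := αᵒᵈ) c A := by
  intro i j k l hi hj hk hl hij hjk hkl h
  change c {ofDual i, ofDual j, ofDual k} = c {ofDual j, ofDual k, ofDual l} at h
  rw [triple_comm (ofDual i), triple_comm (ofDual j)] at h
  have key := hc hl hk hj hi hkl hjk hij h.symm
  change c {ofDual i, ofDual j, ofDual l} = c {ofDual i, ofDual j, ofDual k} ∧
    c {ofDual i, ofDual k, ofDual l} = c {ofDual i, ofDual j, ofDual k}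
  rw [triple_comm (ofDual i), triple_comm (ofDual i), triple_comm (ofDual i)]
  exact ⟨key.2.trans h.symm, key.1.trans h.symm⟩

theorem IsMonochromatic.insert_of_forall_lt {x : α} (hS : IsMonochromatic c b S)
    (hx : ∀ y ∈ S, ∀ z ∈ S, y < z → c {x, y, z} = b) :
    IsMonochromatic c b (insert x S) := by
  intro T hT hT3
  by_cases hxT : x ∈ T
  · have hT2 : #(T.erase x) = 2 := by rw [card_erase_of_mem hxT, hT3]
    obtain ⟨y, z, hyz, hTyz⟩ := card_eq_two.mp hT2
    have hy : y ∈ S := subset_insert_iff.mp hT (by simp [hTyz])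
    have hz : z ∈ S := subset_insert_iff.mp hT (by simp [hTyz])
    rw [← insert_erase hxT, hTyz]
    rcases hyz.lt_or_gt with h | h
    · exact hx y hy z hz h
    · rw [pair_comm]; exact hx z hz y hy h
  · exact hS T ((subset_insert_iff_of_notMem hxT).mp hT) hT3

theorem IsMonochromatic.insert_above {a p q : α} (hc : IsTransitiveOn c A)
    (hSA : S ⊆ A) (hqA : q ∈ A) (hS : IsMonochromatic c b S) (ha : a ∈ S) (hp : p ∈ S)
    (hap : a < p) (hpS : ∀ x ∈ S, x ≤ p) (haS : ∀ x ∈ S, x ≠ p → x ≤ a)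
    (hpq : p < q) (hapq : c {a, p, q} = b) : IsMonochromatic c b (insert q S) := by
  have hpair : ∀ x ∈ S, x ≠ p → c {x, p, q} = b := by
    intro x hx hxp
    rcases (haS x hx hxp).eq_or_lt with rfl | hxa
    · exact hapq
    · have hxap : c {x, a, p} = b := hS.apply_of_lt hx ha hp hxa hap
      rw [(hc (hSA hx) (hSA ha) (hSA hp) hqA hxa hap hpq (hxap.trans hapq.symm)).2, hxap]
  refine hS.insert_of_forall_lt fun x hx y hy hxy => ?_
  rw [triple_comm, insert_comm]
  rcases eq_or_ne y p with rfl | hyp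
  · exact hpair x hx hxy.ne
  · have hyp' : y < p := (hpS y hy).lt_of_ne hyp
    have hxyp : c {x, y, p} = b := hS.apply_of_lt hx hy hp hxy hyp'
    have hypq : c {y, p, q} = b := hpair y hy hyp
    rw [(hc (hSA hx) (hSA hy) (hSA hp) hqA hxy hyp' hpq (hxyp.trans hypq.symm)).1, hxyp]

theorem IsMonochromatic.insert_below {a p q : α} (hc : IsTransitiveOn c A)
    (hSA : S ⊆ A) (hqA : q ∈ A) (hS : IsMonochromatic c b S) (ha : a ∈ S) (hp : p ∈ S)
    (hpa : p < a) (hpS : ∀ x ∈ S, p ≤ x) (haS : ∀ x ∈ S, x ≠ p → a ≤ x)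
    (hqp : q < p) (hqpa : c {q, p, a} = b) : IsMonochromatic c b (insert q S) :=
  IsMonochromatic.insert_above (α := αᵒᵈ) hc.dual hSA hqA hS ha hp hpa hpS haS hqp
    (by rw [← hqpa]; exact congrArg c (triple_comm (α := α) a p q))

theorem exists_isMonochromatic_insert {U C : Finset α} {p : α} (hc : IsTransitiveOn c A)
    (hUA : U ⊆ A) (hCA : C ⊆ A) (hU : IsMonochromatic c b U) (hC : IsMonochromatic c (!b) C)
    (hpU : p ∈ U) (hpC : p ∈ C) (hUp : ∀ x ∈ U, x ≤ p) (hCp : ∀ x ∈ C, p ≤ x)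
    (hU2 : 2 ≤ #U) (hC2 : 2 ≤ #C) :
    (∃ q ∈ C, q ∉ U ∧ IsMonochromatic c b (insert q U)) ∨
      ∃ a ∈ U, a ∉ C ∧ IsMonochromatic c (!b) (insert a C) := by
  have hU' : (U.erase p).Nonempty := by rw [← card_pos, card_erase_of_mem hpU]; omega
  have hC' : (C.erase p).Nonempty := by rw [← card_pos, card_erase_of_mem hpC]; omega
  obtain ⟨hane, haU⟩ := mem_erase.mp ((U.erase p).max'_mem hU')
  obtain ⟨hqne, hqC⟩ := mem_erase.mp ((C.erase p).min'_mem hC')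
  set a := (U.erase p).max' hU'
  set q := (C.erase p).min' hC'
  have hap : a < p := (hUp a haU).lt_of_ne hane
  have hpq : p < q := (hCp q hqC).lt_of_ne' hqne
  have haS : ∀ x ∈ U, x ≠ p → x ≤ a := fun x hx hxp =>
    le_max' _ x (mem_erase.mpr ⟨hxp, hx⟩)
  have hqS : ∀ x ∈ C, x ≠ p → q ≤ x := fun x hx hxp =>
    min'_le _ x (mem_erase.mpr ⟨hxp, hx⟩)
  cases Bool.eq_or_eq_not (c {a, p, q}) b with
  | inl h =>
    exact Or.inl ⟨q, hqC, fun hqU => (hUp q hqU).not_gt hpq,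
      hU.insert_above hc hUA (hCA hqC) haU hpU hap hUp haS hpq h⟩
  | inr h =>
    exact Or.inr ⟨a, haU, fun haC => (hCp a haC).not_gt hap,
      hC.insert_below hc hCA (hUA haU) hqC hpC hpq hCp hqS hap h⟩

theorem exists_isMonochromatic_of_choose_lt (hc : IsTransitiveOn c A) (m n : ℕ)
    (hA : (m + n).choose m < #A) :
    (∃ S ⊆ A, #S = m + 2 ∧ IsMonochromatic c b S) ∨
      ∃ S ⊆ A, #S = n + 2 ∧ IsMonochromatic c (!b) S := by
  classical
  induction m generalizing A n with
  | zero => exact Or.inl (exists_isMonochromatic_of_one_lt_card c b (by simpa using hA))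
  | succ m ihm =>
  induction n generalizing A with
  | zero => exact Or.inr (exists_isMonochromatic_of_one_lt_card c (!b) (by simpa using hA))
  | succ n ihn =>
  by_cases hblue : ∃ S ⊆ A, #S = n + 3 ∧ IsMonochromatic c (!b) S
  · exact Or.inr hblue
  set E := A.filter fun p =>
    ∃ U ⊆ A, #U = m + 2 ∧ IsMonochromatic c b U ∧ p ∈ U ∧ ∀ x ∈ U, x ≤ p
  have hEA : E ⊆ A := filter_subset _ _
  have hAE : #(A \ E) ≤ (m + (n + 1)).choose m := by
    by_contra! hlt
    rcases ihm (hc.mono sdiff_subset) (n + 1) hlt with ⟨U, hU, hUm, hUb⟩ | ⟨S, hS, hSn, hSb⟩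
    · have hUne : U.Nonempty := card_pos.mp (by omega)
      obtain ⟨hpA, hpE⟩ := mem_sdiff.mp (hU (U.max'_mem hUne))
      exact hpE (mem_filter.mpr ⟨hpA, U, hU.trans sdiff_subset, hUm, hUb, U.max'_mem hUne,
        fun x hx => U.le_max' x hx⟩)
    · exact hblue ⟨S, hS.trans sdiff_subset, hSn, hSb⟩
  have hE : (m + 1 + n).choose (m + 1) < #E := by
    have hpascal : (m + 1 + (n + 1)).choose (m + 1) =
        (m + (n + 1)).choose m + (m + 1 + n).choose (m + 1) := by
      rw [show m + 1 + (n + 1) = m + (n + 1) + 1 by omega, Nat.choose_succ_succ',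
        show m + (n + 1) = m + 1 + n by omega]
    have := card_sdiff_add_card_eq_card hEA
    omega
  rcases ihn (hc.mono hEA) hE with ⟨S, hS, hSm, hSb⟩ | ⟨C, hCE, hCn, hCb⟩
  · exact Or.inl ⟨S, hS.trans hEA, hSm, hSb⟩
  have hCne : C.Nonempty := card_pos.mp (by omega)
  obtain ⟨-, U, hUA, hUm, hUb, hpU, hUp⟩ := mem_filter.mp (hCE (C.min'_mem hCne))
  rcases exists_isMonochromatic_insert hc hUA (hCE.trans hEA) hUb hCb hpU (C.min'_mem hCne) hUp
      (fun x hx => C.min'_le x hx) (by omega) (by omega) with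
    ⟨q, hqC, hqU, hqb⟩ | ⟨a, haU, haC, hab⟩
  · exact Or.inl ⟨insert q U, insert_subset (hEA (hCE hqC)) hUA,
      by rw [card_insert_of_notMem hqU, hUm], hqb⟩
  · exact (hblue ⟨insert a C, insert_subset (hUA haU) (hCE.trans hEA),
      by rw [card_insert_of_notMem haC, hCn], hab⟩).elim

end TripleColoring

/-- Combinatorial cups–caps (Hubard et al.): for N = C(k+ℓ-4, k-2) + 1, every
transitive 2-coloring of the triples of {1,…,N} contains a red clique of size k
or a blue clique of size ℓ. (`c T = true` means red, `c T = false` means blue.) -/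
theorem stmt_4 (k l : ℕ) (hk : 2 ≤ k) (hl : 2 ≤ l)
    (N : ℕ) (hN : N = Nat.choose (k + l - 4) (k - 2) + 1)
    (c : Finset ℕ → Bool)
    (htrans : ∀ i1 i2 i3 i4 : ℕ, 1 ≤ i1 → i1 < i2 → i2 < i3 → i3 < i4 → i4 ≤ N →
      c {i1, i2, i3} = c {i2, i3, i4} →
      c {i1, i2, i4} = c {i1, i2, i3} ∧ c {i1, i3, i4} = c {i1, i2, i3}) :
    (∃ S ⊆ Finset.Icc 1 N, S.card = k ∧ ∀ T ⊆ S, T.card = 3 → c T = true) ∨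
    (∃ S ⊆ Finset.Icc 1 N, S.card = l ∧ ∀ T ⊆ S, T.card = 3 → c T = false) := by
  obtain ⟨m, rfl⟩ : ∃ m, k = m + 2 := ⟨k - 2, by omega⟩
  obtain ⟨n, rfl⟩ : ∃ n, l = n + 2 := ⟨l - 2, by omega⟩
  have hc : TripleColoring.IsTransitiveOn c (Finset.Icc 1 N) :=
    fun i₁ i₂ i₃ i₄ h₁ _ _ h₄ h₁₂ h₂₃ h₃₄ => htrans i₁ i₂ i₃ i₄
      (Finset.mem_Icc.mp h₁).1 h₁₂ h₂₃ h₃₄ (Finset.mem_Icc.mp h₄).2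
  have hcard : (m + n).choose m < (Finset.Icc 1 N).card := by
    rw [Nat.card_Icc, hN, show m + 2 + (n + 2) - 4 = m + n by omega,
      show m + 2 - 2 = m by omega]
    omega
  exact TripleColoring.exists_isMonochromatic_of_choose_lt (b := true) hc m n hcard
end

section
/- For every k, ℓ ≥ 2 there exists a transitive 2-coloring of the triples of {1, ..., C(k+ℓ-4, k-2)} with no red clique of size k and no blue clique of size ℓ. -/
/-!
Colorings are glued along Pascal's rule `C(m+n+2, m+1) = C(m+n+1, m) + C(m+n+1, m+1)`: a
coloring of the first block is placed before a (shifted) coloring of the second, and a triple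
meeting both blocks is red iff two of its points lie in the first block. Quadruples meeting both
blocks are then automatically transitive. A red clique meeting both blocks has at most one point
in the second block, a blue one at most one point in the first, so if the blocks' red cliques
have at most `m + 1` resp. `m + 2` points and their blue cliques at most `n + 2` resp. `n + 1`,
those of the glued coloring have at most `m + 2` resp. `n + 2`.
-/

open Finset

namespace TransitiveColoring

abbrev TripleColoring := ℕ → ℕ → ℕ → Bool

def IsTransitive (col : TripleColoring) (N : ℕ) : Prop :=
  ∀ i1 i2 i3 i4 : ℕ, 1 ≤ i1 → i1 < i2 → i2 < i3 → i3 < i4 → i4 ≤ N →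
    col i1 i2 i3 = col i2 i3 i4 → col i1 i2 i4 = col i1 i2 i3 ∧ col i1 i3 i4 = col i1 i2 i3

def IsMonochromatic (col : TripleColoring) (χ : Bool) (S : Finset ℕ) : Prop :=
  ∀ a ∈ S, ∀ b ∈ S, ∀ c ∈ S, a < b → b < c → col a b c = χ

def CliqueBounded (col : TripleColoring) (N : ℕ) (χ : Bool) (r : ℕ) : Prop :=
  ∀ S ⊆ Icc 1 N, IsMonochromatic col χ S → #S ≤ r

def glue (N₁ : ℕ) (col₁ col₂ : TripleColoring) : TripleColoring := fun a b c =>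
  if c ≤ N₁ then col₁ a b c
  else if N₁ < a then col₂ (a - N₁) (b - N₁) (c - N₁)
  else decide (b ≤ N₁)

section glue

variable {N₁ N₂ : ℕ} {col₁ col₂ : TripleColoring} {a b c : ℕ}

lemma glue_of_le (hc : c ≤ N₁) : glue N₁ col₁ col₂ a b c = col₁ a b c := if_pos hc

lemma glue_of_lt (ha : N₁ < a) (hc : N₁ < c) :
    glue N₁ col₁ col₂ a b c = col₂ (a - N₁) (b - N₁) (c - N₁) := by
  rw [glue, if_neg hc.not_ge, if_pos ha]

lemma glue_of_le_of_lt (ha : a ≤ N₁) (hc : N₁ < c) :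
    glue N₁ col₁ col₂ a b c = decide (b ≤ N₁) := by
  rw [glue, if_neg hc.not_ge, if_neg ha.not_gt]

lemma isTransitive_glue (h₁ : IsTransitive col₁ N₁) (h₂ : IsTransitive col₂ N₂) :
    IsTransitive (glue N₁ col₁ col₂) (N₁ + N₂) := by
  intro i1 i2 i3 i4 h1 h12 h23 h34 h4 heq
  rcases le_or_gt i4 N₁ with h4₁ | h4₁
  · simp only [glue_of_le h4₁, glue_of_le (h34.le.trans h4₁)] at heq ⊢
    exact h₁ i1 i2 i3 i4 h1 h12 h23 h34 h4₁ heq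
  rcases lt_or_ge N₁ i1 with h1₁ | h1₁
  · simp only [glue_of_lt h1₁ h4₁, glue_of_lt h1₁ (by omega : N₁ < i3),
      glue_of_lt (by omega : N₁ < i2) h4₁] at heq ⊢
    exact h₂ _ _ _ _ (by omega) (by omega) (by omega) (by omega) (by omega) heq
  rcases le_or_gt i3 N₁ with h3₁ | h3₁
  · simp only [glue_of_le h3₁, glue_of_le_of_lt h1₁ h4₁, glue_of_le_of_lt (by omega : i2 ≤ N₁) h4₁,
      decide_eq_true h3₁, decide_eq_true (by omega : i2 ≤ N₁)] at heq ⊢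
    exact ⟨heq.symm, heq.symm⟩
  rcases le_or_gt i2 N₁ with h2₁ | h2₁
  · simp only [glue_of_le_of_lt h1₁ h3₁, glue_of_le_of_lt h2₁ h4₁, decide_eq_true h2₁,
      decide_eq_false h3₁.not_ge, Bool.true_eq_false] at heq
  · simp only [glue_of_le_of_lt h1₁ h3₁, glue_of_le_of_lt h1₁ h4₁, decide_eq_false h2₁.not_ge,
      decide_eq_false h3₁.not_ge, and_self]

variable {χ : Bool} {S : Finset ℕ} {r₁ r₂ : ℕ}

lemma IsMonochromatic.filter_le (hS : IsMonochromatic (glue N₁ col₁ col₂) χ S) :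
    IsMonochromatic col₁ χ (S.filter (· ≤ N₁)) := by
  intro a ha b hb c hc hab hbc
  simp only [mem_filter] at ha hb hc
  have := hS a ha.1 b hb.1 c hc.1 hab hbc
  rwa [glue_of_le hc.2] at this

lemma IsMonochromatic.image_sub (hS : IsMonochromatic (glue N₁ col₁ col₂) χ S) :
    IsMonochromatic col₂ χ ((S.filter (N₁ < ·)).image (· - N₁)) := by
  simp only [IsMonochromatic, mem_image, mem_filter]
  rintro _ ⟨a, ⟨ha, ha₁⟩, rfl⟩ _ ⟨b, ⟨hb, hb₁⟩, rfl⟩ _ ⟨c, ⟨hc, hc₁⟩, rfl⟩ hab hbc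
  have := hS a ha b hb c hc (by omega) (by omega)
  rwa [glue_of_lt ha₁ hc₁] at this

lemma card_filter_le_of_glue (h₁ : CliqueBounded col₁ N₁ χ r₁) (hS : S ⊆ Icc 1 (N₁ + N₂))
    (hmono : IsMonochromatic (glue N₁ col₁ col₂) χ S) : #(S.filter (· ≤ N₁)) ≤ r₁ := by
  refine h₁ _ (fun x hx => ?_) hmono.filter_le
  simp only [mem_filter] at hx
  have := mem_Icc.mp (hS hx.1)
  exact mem_Icc.mpr ⟨this.1, hx.2⟩

lemma card_filter_lt_of_glue (h₂ : CliqueBounded col₂ N₂ χ r₂) (hS : S ⊆ Icc 1 (N₁ + N₂))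
    (hmono : IsMonochromatic (glue N₁ col₁ col₂) χ S) :
    #(S.filter (N₁ < ·)) ≤ r₂ := by
  rw [← card_image_of_injOn (f := (· - N₁)) (fun x hx y hy hxy => by
    simp only [coe_filter, Set.mem_ofPred_eq] at hx hy
    simp only at hxy
    omega)]
  refine h₂ _ (fun x hx => ?_) hmono.image_sub
  simp only [mem_image, mem_filter] at hx
  obtain ⟨y, ⟨hy, hy₁⟩, rfl⟩ := hx
  have := mem_Icc.mp (hS hy)
  exact mem_Icc.mpr ⟨by omega, by omega⟩

lemma cliqueBounded_glue_true (h₁ : CliqueBounded col₁ N₁ true r₁)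
    (h₂ : CliqueBounded col₂ N₂ true r₂) :
    CliqueBounded (glue N₁ col₁ col₂) (N₁ + N₂) true (max (r₁ + 1) r₂) := by
  intro S hS hmono
  have hA := card_filter_le_of_glue h₁ hS hmono
  have hB := card_filter_lt_of_glue h₂ hS hmono
  have hsplit := card_filter_add_card_filter_not (s := S) (· ≤ N₁)
  simp only [not_le] at hsplit
  rcases (S.filter (· ≤ N₁)).eq_empty_or_nonempty with hA₀ | ⟨a, ha⟩
  · rw [hA₀, card_empty] at hsplit
    omega
  -- a red triple `a < b < c` with `b` in the second block would be blue
  have hB₁ : #(S.filter (N₁ < ·)) ≤ 1 := by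
    by_contra! hB₂
    set B := S.filter (N₁ < ·)
    have hb := mem_filter.mp (B.min'_mem (card_pos.mp (by omega)))
    have hc := mem_filter.mp (B.max'_mem (card_pos.mp (by omega)))
    have ha' := mem_filter.mp ha
    have := hmono a ha'.1 _ hb.1 _ hc.1 (by omega) (B.min'_lt_max'_of_card hB₂)
    rw [glue_of_le_of_lt ha'.2 hc.2, decide_eq_false hb.2.not_ge] at this
    exact Bool.false_ne_true this
  omega

lemma cliqueBounded_glue_false (h₁ : CliqueBounded col₁ N₁ false r₁)
    (h₂ : CliqueBounded col₂ N₂ false r₂) :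
    CliqueBounded (glue N₁ col₁ col₂) (N₁ + N₂) false (max r₁ (r₂ + 1)) := by
  intro S hS hmono
  have hA := card_filter_le_of_glue h₁ hS hmono
  have hB := card_filter_lt_of_glue h₂ hS hmono
  have hsplit := card_filter_add_card_filter_not (s := S) (· ≤ N₁)
  simp only [not_le] at hsplit
  rcases (S.filter (N₁ < ·)).eq_empty_or_nonempty with hB₀ | ⟨c, hc⟩
  · rw [hB₀, card_empty] at hsplit
    omega
  -- a blue triple `a < b < c` with `b` in the first block would be red
  have hA₁ : #(S.filter (· ≤ N₁)) ≤ 1 := by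
    by_contra! hA₂
    set A := S.filter (· ≤ N₁)
    have ha := mem_filter.mp (A.min'_mem (card_pos.mp (by omega)))
    have hb := mem_filter.mp (A.max'_mem (card_pos.mp (by omega)))
    have hc' := mem_filter.mp hc
    have := hmono _ ha.1 _ hb.1 c hc'.1 (A.min'_lt_max'_of_card hA₂) (by omega)
    rw [glue_of_le_of_lt ha.2 hc'.2, decide_eq_true hb.2] at this
    exact Bool.false_ne_true this.symm
  omega

end glue

lemma isTransitive_one (col : TripleColoring) : IsTransitive col 1 := by
  intro i1 i2 i3 i4 h1 h12 h23 h34 h4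
  omega

lemma cliqueBounded_one (col : TripleColoring) (χ : Bool) {r : ℕ} (hr : 1 ≤ r) :
    CliqueBounded col 1 χ r :=
  fun S hS _ => (card_le_card hS).trans (by simpa using hr)

theorem exists_isTransitive_cliqueBounded (m n : ℕ) :
    ∃ col : TripleColoring, IsTransitive col ((m + n).choose m) ∧
      CliqueBounded col ((m + n).choose m) true (m + 1) ∧
      CliqueBounded col ((m + n).choose m) false (n + 1) := by
  induction m generalizing n with
  | zero => exact ⟨fun _ _ _ => true, by simpa using isTransitive_one _,
      by simpa using cliqueBounded_one _ _ le_rfl,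
      by simpa using cliqueBounded_one _ _ (by omega)⟩
  | succ m ihm =>
    induction n with
    | zero => exact ⟨fun _ _ _ => true, by simpa using isTransitive_one _,
        by simpa using cliqueBounded_one _ _ (by omega),
        by simpa using cliqueBounded_one _ _ le_rfl⟩
    | succ n ihn =>
      obtain ⟨col₁, htrans₁, hred₁, hblue₁⟩ := ihm (n + 1)
      obtain ⟨col₂, htrans₂, hred₂, hblue₂⟩ := ihn
      have hpascal : (m + 1 + (n + 1)).choose (m + 1) =
          (m + (n + 1)).choose m + (m + 1 + n).choose (m + 1) := by
        rw [show m + 1 + (n + 1) = m + (n + 1) + 1 by omega, Nat.choose_succ_succ,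
          show m + 1 + n = m + (n + 1) by omega]
      refine ⟨glue ((m + (n + 1)).choose m) col₁ col₂, ?_⟩
      rw [hpascal]
      refine ⟨isTransitive_glue htrans₁ htrans₂, ?_, ?_⟩
      · simpa using cliqueBounded_glue_true hred₁ hred₂
      · simpa using cliqueBounded_glue_false hblue₁ hblue₂

def finsetColoring (col : TripleColoring) (T : Finset ℕ) : Bool :=
  match T.sort (· ≤ ·) with
  | [a, b, c] => col a b c
  | _ => true

section finsetColoring

variable {col : TripleColoring} {a b c : ℕ}

lemma sort_triple (hab : a < b) (hbc : b < c) :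
    ({a, b, c} : Finset ℕ).sort (· ≤ ·) = [a, b, c] := by
  rw [sort_insert _
      (by simp only [mem_insert, mem_singleton, forall_eq_or_imp, forall_eq]; omega)
      (by simp only [mem_insert, mem_singleton]; omega),
    sort_insert _ (by simp only [mem_singleton, forall_eq]; omega)
      (by simp only [mem_singleton]; omega), sort_singleton]

lemma finsetColoring_triple (hab : a < b) (hbc : b < c) :
    finsetColoring col {a, b, c} = col a b c := by
  rw [finsetColoring, sort_triple hab hbc]

lemma isMonochromatic_of_finsetColoring {χ : Bool} {S : Finset ℕ}
    (h : ∀ T ⊆ S, #T = 3 → finsetColoring col T = χ) : IsMonochromatic col χ S := by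
  intro a ha b hb c hc hab hbc
  rw [← finsetColoring_triple (col := col) hab hbc]
  refine h _ (by simp [insert_subset_iff, ha, hb, hc]) ?_
  rw [card_insert_of_notMem (by simp only [mem_insert, mem_singleton]; omega),
    card_insert_of_notMem (by simp only [mem_singleton]; omega), card_singleton]

end finsetColoring

end TransitiveColoring

open TransitiveColoring in
/-- Sharpness of the combinatorial cups–caps theorem: there is a transitive 2-coloring
of the triples of {1,…,C(k+ℓ-4, k-2)} with no red clique of size k and no blue clique
of size ℓ. (`c T = true` means red, `c T = false` means blue.) -/
theorem stmt_5 (k l : ℕ) (hk : 2 ≤ k) (hl : 2 ≤ l) :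
    ∃ c : Finset ℕ → Bool,
      (∀ i1 i2 i3 i4 : ℕ, 1 ≤ i1 → i1 < i2 → i2 < i3 → i3 < i4 →
        i4 ≤ Nat.choose (k + l - 4) (k - 2) →
        c {i1, i2, i3} = c {i2, i3, i4} →
        c {i1, i2, i4} = c {i1, i2, i3} ∧ c {i1, i3, i4} = c {i1, i2, i3}) ∧
      (¬ ∃ S ⊆ Finset.Icc 1 (Nat.choose (k + l - 4) (k - 2)), S.card = k ∧
          ∀ T ⊆ S, T.card = 3 → c T = true) ∧
      (¬ ∃ S ⊆ Finset.Icc 1 (Nat.choose (k + l - 4) (k - 2)), S.card = l ∧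
          ∀ T ⊆ S, T.card = 3 → c T = false) := by
  obtain ⟨col, htrans, hred, hblue⟩ := exists_isTransitive_cliqueBounded (k - 2) (l - 2)
  rw [show k - 2 + (l - 2) = k + l - 4 by omega] at htrans hred hblue
  refine ⟨finsetColoring col, fun i1 i2 i3 i4 h1 h12 h23 h34 h4 => ?_, ?_, ?_⟩
  · rw [finsetColoring_triple h12 h23, finsetColoring_triple h23 h34,
      finsetColoring_triple h12 (h23.trans h34), finsetColoring_triple (h12.trans h23) h34]
    exact htrans i1 i2 i3 i4 h1 h12 h23 h34 h4
  · rintro ⟨S, hS, hcard, hmono⟩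
    have := hred S hS (isMonochromatic_of_finsetColoring hmono)
    omega
  · rintro ⟨S, hS, hcard, hmono⟩
    have := hblue S hS (isMonochromatic_of_finsetColoring hmono)
    omega
end

section
/- Let X = {x_1, ..., x_k} be a k-cap (points in convex position bounded below by a single edge, ordered left to right), and let T_1, ..., T_{k-1} be the regions of its support, where T_i is the region outside conv(X) bounded by the segment x_i x_{i+1} and the lines x_{i-1}x_i and x_{i+1}x_{i+2}. Then any (k-1)-tuple of points obtained by selecting one point from each region T_i, i = 1, ..., k-1, is in convex position. -/
/-- Slope of the segment from `p` to `q`. -/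
noncomputable def slope2 (p q : ℝ × ℝ) : ℝ := (q.2 - p.2) / (q.1 - p.1)

/-- `f 0, …, f (m-1)` is an m-cup: x-coordinates strictly increasing and slopes of
consecutive segments strictly increasing. -/
def IsCupSeq (m : ℕ) (f : ℕ → ℝ × ℝ) : Prop :=
  (∀ i j, i < j → j < m → (f i).1 < (f j).1) ∧
  (∀ i, i + 2 < m → slope2 (f i) (f (i + 1)) < slope2 (f (i + 1)) (f (i + 2)))

/-- `f 0, …, f (m-1)` is an m-cap: x-coordinates strictly increasing and slopes of
consecutive segments strictly decreasing. -/
def IsCapSeq (m : ℕ) (f : ℕ → ℝ × ℝ) : Prop :=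
  (∀ i j, i < j → j < m → (f i).1 < (f j).1) ∧
  (∀ i, i + 2 < m → slope2 (f (i + 1)) (f (i + 2)) < slope2 (f i) (f (i + 1)))

/-- For a k-cap `f 0, …, f (k-1)` (ordered left to right, indices cyclic mod k),
the i-th support region: the open region outside the hull, above the edge
`f i f (i+1)` and below the lines through the neighboring edges. -/
def capRegion (k : ℕ) (f : ℕ → ℝ × ℝ) (i : ℕ) : Set (ℝ × ℝ) :=
  {p | 0 < det2 (f i) (f ((i + 1) % k)) p ∧
       det2 (f ((i + k - 1) % k)) (f i) p < 0 ∧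
       det2 (f ((i + 1) % k)) (f ((i + 2) % k)) p < 0}

/-- For a k-cup `f 0, …, f (k-1)` (ordered left to right, indices cyclic mod k),
the i-th support region: the open region outside the hull, below the edge
`f i f (i+1)` and above the lines through the neighboring edges. -/
def cupRegion (k : ℕ) (f : ℕ → ℝ × ℝ) (i : ℕ) : Set (ℝ × ℝ) :=
  {p | det2 (f i) (f ((i + 1) % k)) p < 0 ∧
       0 < det2 (f ((i + k - 1) % k)) (f i) p ∧
       0 < det2 (f ((i + 1) % k)) (f ((i + 2) % k)) p}

/-!
The point `g i` lies strictly above the line through the edge `f i f (i+1)`, and every other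
selected point lies strictly below it. Indeed `g j` is below the line of an edge adjacent to
its own edge, on the far side of their common vertex; since the cap turns clockwise at every
vertex, "below the line of edge `m`, beyond its inner vertex" passes from edge to edge along the
cap. The open half-plane below the line through `f i f (i+1)` is convex, so it contains the hull
of the other points but not `g i`.
-/

lemma sub_fst_mul_det2 (a b c p : ℝ × ℝ) :
    (b.1 - a.1) * det2 b c p = (c.1 - b.1) * det2 a b p - (p.1 - b.1) * det2 a b c := by
  simp only [det2]; ring

section ClockwiseTurn

variable {a b c p : ℝ × ℝ}

lemma det2_neg_of_slope2_lt (hab : a.1 < b.1) (hbc : b.1 < c.1)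
    (h : slope2 b c < slope2 a b) : det2 a b c < 0 := by
  rw [slope2, slope2, div_lt_div_iff₀ (by linarith) (by linarith)] at h
  simp only [det2]
  nlinarith

variable (hab : a.1 < b.1) (hbc : b.1 < c.1) (habc : det2 a b c < 0)
include hab hbc habc

lemma det2_right_neg_of_det2_left_neg (hp : p.1 < b.1) (h : det2 a b p < 0) :
    det2 b c p < 0 := by
  by_contra! hcon
  nlinarith [sub_fst_mul_det2 a b c p, mul_nonneg (sub_pos.mpr hab).le hcon]

lemma det2_left_neg_of_det2_right_neg (hp : b.1 < p.1) (h : det2 b c p < 0) :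
    det2 a b p < 0 := by
  by_contra! hcon
  nlinarith [sub_fst_mul_det2 a b c p, mul_nonneg (sub_pos.mpr hbc).le hcon]

lemma fst_lt_of_det2_pos_of_det2_neg (hpab : 0 < det2 a b p) (hpbc : det2 b c p < 0) :
    p.1 < b.1 := by
  by_contra! hcon
  nlinarith [sub_fst_mul_det2 a b c p, mul_nonneg (sub_nonneg.mpr hcon) (neg_pos.mpr habc).le]

lemma lt_fst_of_det2_neg_of_det2_pos (hpab : det2 a b p < 0) (hpbc : 0 < det2 b c p) :
    b.1 < p.1 := by
  by_contra! hcon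
  nlinarith [sub_fst_mul_det2 a b c p, mul_nonneg (sub_nonneg.mpr hcon) (neg_pos.mpr habc).le]

end ClockwiseTurn

lemma convex_setOf_det2_neg (a b : ℝ × ℝ) : Convex ℝ {p | det2 a b p < 0} := by
  have hlin : IsLinearMap ℝ fun p : ℝ × ℝ => (b.1 - a.1) * p.2 - (b.2 - a.2) * p.1 :=
    ⟨fun p q => by simp only [Prod.fst_add, Prod.snd_add]; ring,
      fun r p => by simp only [Prod.smul_fst, Prod.smul_snd, smul_eq_mul]; ring⟩
  have hset : {p | det2 a b p < 0} =
      {p | (b.1 - a.1) * p.2 - (b.2 - a.2) * p.1 < (b.1 - a.1) * a.2 - (b.2 - a.2) * a.1} := by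
    ext p
    simp only [Set.mem_ofPred_eq, det2]
    constructor <;> intro <;> linarith
  exact hset ▸ convex_halfSpace_lt hlin _

section CapSeq

variable {k : ℕ} {f : ℕ → ℝ × ℝ}

lemma IsCapSeq.det2_neg (hf : IsCapSeq k f) {m : ℕ} (hm : m + 2 < k) :
    det2 (f m) (f (m + 1)) (f (m + 2)) < 0 :=
  det2_neg_of_slope2_lt (hf.1 _ _ (by omega) (by omega)) (hf.1 _ _ (by omega) hm) (hf.2 m hm)

lemma IsCapSeq.det2_neg_of_le (hf : IsCapSeq k f) {n : ℕ} {p : ℝ × ℝ} (hp : p.1 < (f n).1)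
    (hn : det2 (f n) (f (n + 1)) p < 0) {m : ℕ} (hnm : n ≤ m) (hm : m + 1 < k) :
    det2 (f m) (f (m + 1)) p < 0 := by
  induction m, hnm using Nat.le_induction with
  | base => exact hn
  | succ m hnm ih =>
    exact det2_right_neg_of_det2_left_neg (hf.1 _ _ (by omega) (by omega))
      (hf.1 _ _ (by omega) hm) (hf.det2_neg hm)
      (hp.trans (hf.1 _ _ (by omega) (by omega))) (ih (by omega))

lemma IsCapSeq.det2_neg_of_ge (hf : IsCapSeq k f) {n : ℕ} {p : ℝ × ℝ}
    (hp : (f (n + 1)).1 < p.1) (hn : det2 (f n) (f (n + 1)) p < 0) (hnk : n + 1 < k)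
    {m : ℕ} (hmn : m ≤ n) : det2 (f m) (f (m + 1)) p < 0 := by
  induction hmn using Nat.decreasingInduction with
  | self => exact hn
  | of_succ m hmn ih =>
    exact det2_left_neg_of_det2_right_neg (hf.1 _ _ (by omega) (by omega))
      (hf.1 _ _ (by omega) (by omega)) (hf.det2_neg (by omega))
      ((hf.1 _ _ (by omega) (by omega)).trans hp) ih

lemma det2_pos_of_mem_capRegion {i : ℕ} {p : ℝ × ℝ} (hp : p ∈ capRegion k f i)
    (hi : i + 1 < k) : 0 < det2 (f i) (f (i + 1)) p := by
  simpa only [Nat.mod_eq_of_lt hi] using hp.1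

lemma det2_prev_neg_of_mem_capRegion {i : ℕ} {p : ℝ × ℝ} (hp : p ∈ capRegion k f (i + 1))
    (hi : i + 1 < k) : det2 (f i) (f (i + 1)) p < 0 := by
  simpa only [show i + 1 + k - 1 = i + k by omega, Nat.add_mod_right,
    Nat.mod_eq_of_lt (show i < k by omega)] using hp.2.1

lemma det2_next_neg_of_mem_capRegion {i : ℕ} {p : ℝ × ℝ} (hp : p ∈ capRegion k f i)
    (hi : i + 2 < k) : det2 (f (i + 1)) (f (i + 2)) p < 0 := by
  simpa only [Nat.mod_eq_of_lt (show i + 1 < k by omega), Nat.mod_eq_of_lt hi] using hp.2.2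

lemma IsCapSeq.det2_neg_of_mem_capRegion (hf : IsCapSeq k f) {i j : ℕ} {p : ℝ × ℝ}
    (hp : p ∈ capRegion k f j) (hi : i + 1 < k) (hj : j + 1 < k) (hij : i ≠ j) :
    det2 (f i) (f (i + 1)) p < 0 := by
  rcases hij.lt_or_gt with hij | hji
  · obtain ⟨n, rfl⟩ : ∃ n, j = n + 1 := ⟨j - 1, by omega⟩
    have hprev := det2_prev_neg_of_mem_capRegion hp (by omega)
    have hfp : (f (n + 1)).1 < p.1 :=
      lt_fst_of_det2_neg_of_det2_pos (hf.1 _ _ (by omega) (by omega))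
        (hf.1 _ _ (by omega) hj) (hf.det2_neg (by omega)) hprev
        (det2_pos_of_mem_capRegion hp hj)
    exact hf.det2_neg_of_ge hfp hprev (by omega) (by omega)
  · have hnext := det2_next_neg_of_mem_capRegion hp (by omega)
    have hpf : p.1 < (f (j + 1)).1 :=
      fst_lt_of_det2_pos_of_det2_neg (hf.1 _ _ (by omega) (by omega))
        (hf.1 _ _ (by omega) (by omega)) (hf.det2_neg (by omega))
        (det2_pos_of_mem_capRegion hp hj) hnext
    exact hf.det2_neg_of_le hpf hnext (by omega) hi

end CapSeq

theorem stmt_7_general (k : ℕ) (f : ℕ → ℝ × ℝ) (hcap : IsCapSeq k f)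
    (g : ℕ → ℝ × ℝ) (hg : ∀ i < k - 1, g i ∈ capRegion k f i) :
    ConvexPos {p : ℝ × ℝ | ∃ i < k - 1, g i = p} := by
  rintro _ ⟨i, hi, rfl⟩ hmem
  have hbelow : {p : ℝ × ℝ | ∃ j < k - 1, g j = p} \ {g i}
      ⊆ {p | det2 (f i) (f (i + 1)) p < 0} := by
    rintro _ ⟨⟨j, hj, rfl⟩, hji⟩
    exact hcap.det2_neg_of_mem_capRegion (hg j hj) (by omega) (by omega)
      (by rintro rfl; exact hji rfl)
  exact (det2_pos_of_mem_capRegion (hg i hi) (by omega)).not_gt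
    (convexHull_min hbelow (convex_setOf_det2_neg _ _) hmem)

/-- Selecting one point from each of the first k-1 support regions of a k-cap
always yields a (k-1)-point set in convex position. -/
theorem stmt_7 (k : ℕ) (hk : 3 ≤ k) (f : ℕ → ℝ × ℝ) (hcap : IsCapSeq k f)
    (g : ℕ → ℝ × ℝ) (hg : ∀ i < k - 1, g i ∈ capRegion k f i) :
    ConvexPos {p : ℝ × ℝ | ∃ i < k - 1, g i = p} :=
  stmt_7_general k f hcap g hg
end

section
/- Let S_1, ..., S_t be finite planar point sets such that each S_r is a cap, and for each r, for every pair of points p, q ∈ S_r, the line through p and q has all points of S_1 ∪ ... ∪ S_t other than p and q strictly on one side (below it). Then S_1 ∪ ... ∪ S_t is a cap, and hence in convex position. -/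
/-- A finite planar set is a cap if it is in convex position and every point has a
(non-vertical) line through it with all other points of the set strictly below. -/
def CapSet (S : Finset (ℝ × ℝ)) : Prop :=
  ConvexPos (S : Set (ℝ × ℝ)) ∧
  ∀ p ∈ S, ∃ m c : ℝ, p.2 = m * p.1 + c ∧ ∀ q ∈ S, q ≠ p → q.2 < m * q.1 + c

open Filter Topology

lemma convexPos_of_forall_exists_line_above (S : Set (ℝ × ℝ))
    (h : ∀ p ∈ S, ∃ m c : ℝ, p.2 = m * p.1 + c ∧ ∀ q ∈ S, q ≠ p → q.2 < m * q.1 + c) :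
    ConvexPos S := by
  intro p hp hp_hull
  obtain ⟨m, c, hpc, hbelow⟩ := h p hp
  have hlin : IsLinearMap ℝ (fun x : ℝ × ℝ => x.2 - m * x.1) :=
    ⟨fun x y => by simp only [Prod.fst_add, Prod.snd_add]; ring,
     fun a x => by simp only [Prod.smul_fst, Prod.smul_snd, smul_eq_mul]; ring⟩
  have hsub : S \ {p} ⊆ {x : ℝ × ℝ | x.2 - m * x.1 < c} := by
    rintro z ⟨hz, hzp⟩
    show z.2 - m * z.1 < c
    linarith [hbelow z hz hzp]
  have : p.2 - m * p.1 < c := convexHull_min hsub (convex_halfSpace_lt hlin c) hp_hull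
  linarith

lemma exists_line_above_of_tilt (T : Finset (ℝ × ℝ)) (p : ℝ × ℝ) (m c m' c' : ℝ)
    (hp : p.2 = m * p.1 + c) (hp' : p.2 = m' * p.1 + c')
    (h : ∀ z ∈ T, z ≠ p →
      z.2 < m * z.1 + c ∨ (z.2 = m * z.1 + c ∧ z.2 < m' * z.1 + c')) :
    ∃ m c : ℝ, p.2 = m * p.1 + c ∧ ∀ z ∈ T, z ≠ p → z.2 < m * z.1 + c := by
  have hev : ∀ᶠ s in 𝓝[>] (0 : ℝ), ∀ z ∈ T.erase p,
      z.2 < (1 - s) * (m * z.1 + c) + s * (m' * z.1 + c') := by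
    refine (eventually_all_finset _).2 fun z hz => ?_
    obtain ⟨hzp, hzT⟩ := Finset.mem_erase.1 hz
    rcases h z hzT hzp with hstrict | ⟨hzon, hzbelow⟩
    · have hcont : ContinuousAt (fun s : ℝ => (1 - s) * (m * z.1 + c) + s * (m' * z.1 + c')) 0 :=
        by fun_prop
      exact nhdsWithin_le_nhds (continuousAt_const.eventually_lt hcont (by simpa using hstrict))
    · filter_upwards [eventually_mem_nhdsWithin] with s (hs : 0 < s)
      nlinarith
  obtain ⟨s, hs⟩ := hev.exists
  refine ⟨(1 - s) * m + s * m', (1 - s) * c + s * c',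
    by linear_combination (1 - s) * hp + s * hp', fun z hz hzp => ?_⟩
  linarith [hs z (Finset.mem_erase.2 ⟨hzp, hz⟩)]

/-- If each S_r is a cap (with at least two points) and for every pair of points of
the same S_r the line through them has all other points of the union strictly below,
then the union of the S_r is a cap, hence in convex position. -/
theorem stmt_12 (t : ℕ) (S : ℕ → Finset (ℝ × ℝ))
    (hcap : ∀ r < t, CapSet (S r))
    (h2 : ∀ r < t, 2 ≤ (S r).card)
    (hline : ∀ r < t, ∀ p ∈ S r, ∀ q ∈ S r, p ≠ q →
      ∃ m c : ℝ, p.2 = m * p.1 + c ∧ q.2 = m * q.1 + c ∧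
        ∀ s < t, ∀ z ∈ S s, z ≠ p → z ≠ q → z.2 < m * z.1 + c) :
    CapSet ((Finset.range t).biUnion S) ∧
    ConvexPos (((Finset.range t).biUnion S : Finset (ℝ × ℝ)) : Set (ℝ × ℝ)) := by
  set T := (Finset.range t).biUnion S
  have hline_above : ∀ p ∈ T, ∃ m c : ℝ, p.2 = m * p.1 + c ∧
      ∀ z ∈ T, z ≠ p → z.2 < m * z.1 + c := by
    intro p hp
    obtain ⟨r, hr, hpr⟩ := Finset.mem_biUnion.1 hp
    rw [Finset.mem_range] at hr
    obtain ⟨q, hq, hqp⟩ := Finset.exists_mem_ne (h2 r hr) p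
    obtain ⟨m, c, hp_on, hq_on, hbelow⟩ := hline r hr p hpr q hq hqp.symm
    obtain ⟨m', c', hp_on', hbelow'⟩ := (hcap r hr).2 p hpr
    refine exists_line_above_of_tilt T p m c m' c' hp_on hp_on' fun z hz hzp => ?_
    by_cases hzq : z = q
    · subst hzq
      exact .inr ⟨hq_on, hbelow' z hq hzp⟩
    · obtain ⟨s, hs, hzs⟩ := Finset.mem_biUnion.1 hz
      exact .inl (hbelow s (Finset.mem_range.1 hs) z hzs hzp hzq)
  have hconv := convexPos_of_forall_exists_line_above (T : Set (ℝ × ℝ)) hline_above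
  exact ⟨⟨hconv, hline_above⟩, hconv⟩
end

section
/- Let p_1, p_2, p_3, p_4 be four points in general position, and let L_1, L_2, L_3 be the three lines spanned by pairs of {p_1, p_2, p_3}. If x and p_4 lie in the same open cell of the line arrangement of L_1, L_2, L_3, and {p_1,p_2,p_3,x} is in convex position, then {p_1,p_2,p_3,p_4} is in convex position. -/
lemma convex_halfplane (a b : ℝ × ℝ) (k : ℝ) :
    Convex ℝ {w : ℝ × ℝ | 0 ≤ det2 a b w * k} := by
  intro u hu v hv α β hα hβ hab
  simp only [Set.mem_setOf_eq] at *
  have hβ' : β = 1 - α := by linarith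
  subst hβ'
  have : det2 a b (α • u + (1 - α) • v) * k
      = α * (det2 a b u * k) + (1 - α) * (det2 a b v * k) := by
    simp [det2, Prod.smul_fst, Prod.smul_snd, smul_eq_mul]
    ring
  rw [this]
  have := mul_nonneg hα hu
  have := mul_nonneg hβ hv
  nlinarith

lemma collinear_of_det2 (a b c : ℝ × ℝ) (h : det2 a b c = 0) :
    Collinear ℝ ({a, b, c} : Set (ℝ × ℝ)) := by
  rw [collinear_iff_exists_forall_eq_smul_vadd]
  by_cases hb : b = a
  · refine ⟨a, c - a, ?_⟩
    intro p hp
    rcases hp with h' | h' | h'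
    · exact ⟨0, by rw [h']; simp⟩
    · exact ⟨0, by rw [h', hb]; simp⟩
    · rw [Set.mem_singleton_iff] at h'
      exact ⟨1, by rw [h']; simp⟩
  · refine ⟨a, b - a, ?_⟩
    intro p hp
    rcases hp with h' | h' | h'
    · exact ⟨0, by rw [h']; simp⟩
    · exact ⟨1, by rw [h']; simp⟩
    · rw [Set.mem_singleton_iff] at h'
      subst h'
      unfold det2 at h
      by_cases h1 : b.1 = a.1
      · have h2 : b.2 ≠ a.2 := by
          intro h2; exact hb (Prod.ext h1 h2)
        refine ⟨(p.2 - a.2) / (b.2 - a.2), ?_⟩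
        have h2' := sub_ne_zero.mpr h2
        have hc1 : p.1 = a.1 := by
          rw [h1] at h
          have : (b.2 - a.2) * (p.1 - a.1) = 0 := by linarith
          rcases mul_eq_zero.mp this with h' | h'
          · exact absurd h' h2'
          · linarith [sub_eq_zero.mp h']
        apply Prod.ext <;>
          simp [Prod.smul_fst, Prod.smul_snd, smul_eq_mul, hc1, h1]
        field_simp
        ring
      · refine ⟨(p.1 - a.1) / (b.1 - a.1), ?_⟩
        have h1' := sub_ne_zero.mpr h1
        apply Prod.ext <;>
          simp [Prod.smul_fst, Prod.smul_snd, smul_eq_mul]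
        · field_simp
          ring
        · field_simp
          linear_combination h

lemma mem_triangle_iff (a b c w : ℝ × ℝ) (hD : det2 a b c ≠ 0) :
    w ∈ convexHull ℝ ({a, b, c} : Set (ℝ × ℝ)) ↔
      0 ≤ det2 b c w * det2 a b c ∧ 0 ≤ det2 c a w * det2 a b c ∧
        0 ≤ det2 a b w * det2 a b c := by
  have hDD : (0:ℝ) < det2 a b c * det2 a b c := mul_self_pos.mpr hD
  constructor
  · intro hw
    refine ⟨?_, ?_, ?_⟩
    · have hsub : ({a, b, c} : Set (ℝ × ℝ)) ⊆ {w | 0 ≤ det2 b c w * det2 a b c} := by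
        refine Set.insert_subset ?_ (Set.insert_subset ?_ (Set.singleton_subset_iff.mpr ?_)) <;>
          simp only [Set.mem_setOf_eq]
        · have h : det2 b c a = det2 a b c := by unfold det2; ring
          rw [h]; exact le_of_lt hDD
        · have h : det2 b c b = 0 := by unfold det2; ring
          rw [h, zero_mul]
        · have h : det2 b c c = 0 := by unfold det2; ring
          rw [h, zero_mul]
      exact convexHull_min hsub (convex_halfplane b c _) hw
    · have hsub : ({a, b, c} : Set (ℝ × ℝ)) ⊆ {w | 0 ≤ det2 c a w * det2 a b c} := by
        refine Set.insert_subset ?_ (Set.insert_subset ?_ (Set.singleton_subset_iff.mpr ?_)) <;>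
          simp only [Set.mem_setOf_eq]
        · have h : det2 c a a = 0 := by unfold det2; ring
          rw [h, zero_mul]
        · have h : det2 c a b = det2 a b c := by unfold det2; ring
          rw [h]; exact le_of_lt hDD
        · have h : det2 c a c = 0 := by unfold det2; ring
          rw [h, zero_mul]
      exact convexHull_min hsub (convex_halfplane c a _) hw
    · have hsub : ({a, b, c} : Set (ℝ × ℝ)) ⊆ {w | 0 ≤ det2 a b w * det2 a b c} := by
        refine Set.insert_subset ?_ (Set.insert_subset ?_ (Set.singleton_subset_iff.mpr ?_)) <;>
          simp only [Set.mem_setOf_eq]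
        · have h : det2 a b a = 0 := by unfold det2; ring
          rw [h, zero_mul]
        · have h : det2 a b b = 0 := by unfold det2; ring
          rw [h, zero_mul]
        · exact le_of_lt hDD
      exact convexHull_min hsub (convex_halfplane a b _) hw
  · rintro ⟨h1, h2, h3⟩
    have key := Finset.centerMass_mem_convexHull (Finset.univ : Finset (Fin 3))
      (w := ![det2 b c w * det2 a b c, det2 c a w * det2 a b c, det2 a b w * det2 a b c])
      (z := ![a, b, c]) (s := ({a, b, c} : Set (ℝ × ℝ)))
      (by intro i _; fin_cases i <;> simpa using (by assumption))
      (by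
        rw [Fin.sum_univ_three]
        simp only [Matrix.cons_val_zero, Matrix.cons_val_one, Matrix.head_cons,
          Matrix.cons_val_two, Matrix.tail_cons]
        have h : det2 b c w * det2 a b c + det2 c a w * det2 a b c + det2 a b w * det2 a b c
            = det2 a b c * det2 a b c := by unfold det2; ring
        rw [h]; exact hDD)
      (by intro i _; fin_cases i <;> simp)
    have hcm : (Finset.univ : Finset (Fin 3)).centerMass
        ![det2 b c w * det2 a b c, det2 c a w * det2 a b c, det2 a b w * det2 a b c]
        ![a, b, c] = w := by
      rw [Finset.centerMass, Fin.sum_univ_three, Fin.sum_univ_three]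
      simp only [Matrix.cons_val_zero, Matrix.cons_val_one, Matrix.head_cons,
        Matrix.cons_val_two, Matrix.tail_cons]
      have hsum : det2 b c w * det2 a b c + det2 c a w * det2 a b c + det2 a b w * det2 a b c
          = det2 a b c * det2 a b c := by unfold det2; ring
      rw [hsum]
      have hvec : (det2 b c w * det2 a b c) • a + (det2 c a w * det2 a b c) • b
          + (det2 a b w * det2 a b c) • c = (det2 a b c * det2 a b c) • w := by
        apply Prod.ext <;>
          simp only [Prod.fst_add, Prod.snd_add, Prod.smul_fst, Prod.smul_snd, smul_eq_mul] <;>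
          (unfold det2; ring)
      rw [hvec, smul_smul, inv_mul_cancel₀ (ne_of_gt hDD), one_smul]
    rwa [hcm] at key

lemma sgn_iff {u v : ℝ} (h : 0 < u * v) : (0 ≤ u ↔ 0 ≤ v) := by
  constructor <;> intro h' <;> nlinarith

lemma transfer {u v u' v' : ℝ} (hu : 0 < u * u') (hv : 0 < v * v') :
    (0 ≤ u * v ↔ 0 ≤ u' * v') :=
  sgn_iff (by have := mul_pos hu hv; nlinarith)

lemma iff3 {A B C A' B' C' : Prop} (h1 : A ↔ A') (h2 : B ↔ B') (h3 : C ↔ C') :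
    (A ∧ B ∧ C) ↔ (A' ∧ B' ∧ C') := by rw [h1, h2, h3]

set_option maxHeartbeats 1600000 in
/-- Convex position of {p1, p2, p3, z} depends only on the open cell of the
arrangement of the three lines through pairs of p1, p2, p3 containing z: if x and p4
lie strictly on the same side of each of the three lines, and {p1, p2, p3, x} is in
convex position, then so is {p1, p2, p3, p4}. -/
theorem stmt_13 (p1 p2 p3 p4 x : ℝ × ℝ)
    (hgen : ¬ Collinear ℝ ({p1, p2, p3} : Set (ℝ × ℝ)))
    (h12 : 0 < det2 p1 p2 x * det2 p1 p2 p4)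
    (h13 : 0 < det2 p1 p3 x * det2 p1 p3 p4)
    (h23 : 0 < det2 p2 p3 x * det2 p2 p3 p4)
    (hx : ConvexPos {p1, p2, p3, x}) :
    ConvexPos {p1, p2, p3, p4} := by
  have hD : det2 p1 p2 p3 ≠ 0 := fun h => hgen (collinear_of_det2 _ _ _ h)
  have tDD : 0 < det2 p1 p2 p3 * det2 p1 p2 p3 := mul_self_pos.mpr hD
  have ha3 : det2 p1 p2 x ≠ 0 := by
    intro h; rw [h, zero_mul] at h12; exact lt_irrefl 0 h12
  have hb3 : det2 p1 p2 p4 ≠ 0 := by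
    intro h; rw [h, mul_zero] at h12; exact lt_irrefl 0 h12
  have ha2 : det2 p1 p3 x ≠ 0 := by
    intro h; rw [h, zero_mul] at h13; exact lt_irrefl 0 h13
  have hb2 : det2 p1 p3 p4 ≠ 0 := by
    intro h; rw [h, mul_zero] at h13; exact lt_irrefl 0 h13
  have ha1 : det2 p2 p3 x ≠ 0 := by
    intro h; rw [h, zero_mul] at h23; exact lt_irrefl 0 h23
  have hb1 : det2 p2 p3 p4 ≠ 0 := by
    intro h; rw [h, mul_zero] at h23; exact lt_irrefl 0 h23
  have e12 : p1 ≠ p2 := fun h => hD (by rw [h]; unfold det2; ring)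
  have e13 : p1 ≠ p3 := fun h => ha2 (by rw [h]; unfold det2; ring)
  have e23 : p2 ≠ p3 := fun h => ha1 (by rw [h]; unfold det2; ring)
  have ex1 : x ≠ p1 := fun h => ha3 (by rw [h]; unfold det2; ring)
  have ex2 : x ≠ p2 := fun h => ha3 (by rw [h]; unfold det2; ring)
  have ex3 : x ≠ p3 := fun h => ha2 (by rw [h]; unfold det2; ring)
  -- non-memberships for x
  have hx4 : x ∉ convexHull ℝ ({p1, p2, p3} : Set (ℝ × ℝ)) := by
    intro h
    refine hx x (by simp) (convexHull_mono ?_ h)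
    rintro q hq
    simp only [Set.mem_insert_iff, Set.mem_singleton_iff, Set.mem_diff] at *
    rcases hq with rfl | rfl | rfl
    · exact ⟨Or.inl rfl, Ne.symm ex1⟩
    · exact ⟨Or.inr (Or.inl rfl), Ne.symm ex2⟩
    · exact ⟨Or.inr (Or.inr (Or.inl rfl)), Ne.symm ex3⟩
  have hx1 : p1 ∉ convexHull ℝ ({p2, p3, x} : Set (ℝ × ℝ)) := by
    intro h
    refine hx p1 (by simp) (convexHull_mono ?_ h)
    rintro q hq
    simp only [Set.mem_insert_iff, Set.mem_singleton_iff, Set.mem_diff] at *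
    rcases hq with rfl | rfl | rfl
    · exact ⟨Or.inr (Or.inl rfl), Ne.symm e12⟩
    · exact ⟨Or.inr (Or.inr (Or.inl rfl)), Ne.symm e13⟩
    · exact ⟨Or.inr (Or.inr (Or.inr rfl)), ex1⟩
  have hx2 : p2 ∉ convexHull ℝ ({p1, p3, x} : Set (ℝ × ℝ)) := by
    intro h
    refine hx p2 (by simp) (convexHull_mono ?_ h)
    rintro q hq
    simp only [Set.mem_insert_iff, Set.mem_singleton_iff, Set.mem_diff] at *
    rcases hq with rfl | rfl | rfl
    · exact ⟨Or.inl rfl, e12⟩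
    · exact ⟨Or.inr (Or.inr (Or.inl rfl)), Ne.symm e23⟩
    · exact ⟨Or.inr (Or.inr (Or.inr rfl)), ex2⟩
  have hx3 : p3 ∉ convexHull ℝ ({p1, p2, x} : Set (ℝ × ℝ)) := by
    intro h
    refine hx p3 (by simp) (convexHull_mono ?_ h)
    rintro q hq
    simp only [Set.mem_insert_iff, Set.mem_singleton_iff, Set.mem_diff] at *
    rcases hq with rfl | rfl | rfl
    · exact ⟨Or.inl rfl, e13⟩
    · exact ⟨Or.inr (Or.inl rfl), e23⟩
    · exact ⟨Or.inr (Or.inr (Or.inr rfl)), ex3⟩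
  -- transfer to p4
  have i4 : (x ∈ convexHull ℝ ({p1, p2, p3} : Set (ℝ × ℝ))) ↔
      (p4 ∈ convexHull ℝ ({p1, p2, p3} : Set (ℝ × ℝ))) := by
    rw [mem_triangle_iff p1 p2 p3 x hD, mem_triangle_iff p1 p2 p3 p4 hD]
    refine iff3 (transfer h23 tDD) (transfer ?_ tDD) (transfer h12 tDD)
    have h : det2 p3 p1 x * det2 p3 p1 p4 = det2 p1 p3 x * det2 p1 p3 p4 := by
      unfold det2; ring
    rw [h]; exact h13
  have i1 : (p1 ∈ convexHull ℝ ({p2, p3, x} : Set (ℝ × ℝ))) ↔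
      (p1 ∈ convexHull ℝ ({p2, p3, p4} : Set (ℝ × ℝ))) := by
    rw [mem_triangle_iff p2 p3 x p1 ha1, mem_triangle_iff p2 p3 p4 p1 hb1]
    refine iff3 (transfer ?_ h23) (transfer ?_ h23) (transfer ?_ h23)
    · have h : det2 p3 x p1 * det2 p3 p4 p1 = det2 p1 p3 x * det2 p1 p3 p4 := by
        unfold det2; ring
      rw [h]; exact h13
    · have h : det2 x p2 p1 * det2 p4 p2 p1 = det2 p1 p2 x * det2 p1 p2 p4 := by
        unfold det2; ring
      rw [h]; exact h12
    · have h : det2 p2 p3 p1 * det2 p2 p3 p1 = det2 p1 p2 p3 * det2 p1 p2 p3 := by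
        unfold det2; ring
      rw [h]; exact tDD
  have i2 : (p2 ∈ convexHull ℝ ({p1, p3, x} : Set (ℝ × ℝ))) ↔
      (p2 ∈ convexHull ℝ ({p1, p3, p4} : Set (ℝ × ℝ))) := by
    rw [mem_triangle_iff p1 p3 x p2 ha2, mem_triangle_iff p1 p3 p4 p2 hb2]
    refine iff3 (transfer ?_ h13) (transfer ?_ h13) (transfer ?_ h13)
    · have h : det2 p3 x p2 * det2 p3 p4 p2 = det2 p2 p3 x * det2 p2 p3 p4 := by
        unfold det2; ring
      rw [h]; exact h23
    · have h : det2 x p1 p2 * det2 p4 p1 p2 = det2 p1 p2 x * det2 p1 p2 p4 := by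
        unfold det2; ring
      rw [h]; exact h12
    · have h : det2 p1 p3 p2 * det2 p1 p3 p2 = det2 p1 p2 p3 * det2 p1 p2 p3 := by
        unfold det2; ring
      rw [h]; exact tDD
  have i3 : (p3 ∈ convexHull ℝ ({p1, p2, x} : Set (ℝ × ℝ))) ↔
      (p3 ∈ convexHull ℝ ({p1, p2, p4} : Set (ℝ × ℝ))) := by
    rw [mem_triangle_iff p1 p2 x p3 ha3, mem_triangle_iff p1 p2 p4 p3 hb3]
    refine iff3 (transfer ?_ h12) (transfer ?_ h12) (transfer tDD h12)
    · have h : det2 p2 x p3 * det2 p2 p4 p3 = det2 p2 p3 x * det2 p2 p3 p4 := by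
        unfold det2; ring
      rw [h]; exact h23
    · have h : det2 x p1 p3 * det2 p4 p1 p3 = det2 p1 p3 x * det2 p1 p3 p4 := by
        unfold det2; ring
      rw [h]; exact h13
  have g4 : p4 ∉ convexHull ℝ ({p1, p2, p3} : Set (ℝ × ℝ)) := fun h => hx4 (i4.mpr h)
  have g1 : p1 ∉ convexHull ℝ ({p2, p3, p4} : Set (ℝ × ℝ)) := fun h => hx1 (i1.mpr h)
  have g2 : p2 ∉ convexHull ℝ ({p1, p3, p4} : Set (ℝ × ℝ)) := fun h => hx2 (i2.mpr h)
  have g3 : p3 ∉ convexHull ℝ ({p1, p2, p4} : Set (ℝ × ℝ)) := fun h => hx3 (i3.mpr h)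
  have sub1 : ({p1, p2, p3, p4} : Set (ℝ × ℝ)) \ {p1} ⊆ ({p2, p3, p4} : Set (ℝ × ℝ)) := by
    rintro q ⟨hq, hne⟩
    simp only [Set.mem_insert_iff, Set.mem_singleton_iff] at hq hne ⊢
    tauto
  have sub2 : ({p1, p2, p3, p4} : Set (ℝ × ℝ)) \ {p2} ⊆ ({p1, p3, p4} : Set (ℝ × ℝ)) := by
    rintro q ⟨hq, hne⟩
    simp only [Set.mem_insert_iff, Set.mem_singleton_iff] at hq hne ⊢
    tauto
  have sub3 : ({p1, p2, p3, p4} : Set (ℝ × ℝ)) \ {p3} ⊆ ({p1, p2, p4} : Set (ℝ × ℝ)) := by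
    rintro q ⟨hq, hne⟩
    simp only [Set.mem_insert_iff, Set.mem_singleton_iff] at hq hne ⊢
    tauto
  have sub4 : ({p1, p2, p3, p4} : Set (ℝ × ℝ)) \ {p4} ⊆ ({p1, p2, p3} : Set (ℝ × ℝ)) := by
    rintro q ⟨hq, hne⟩
    simp only [Set.mem_insert_iff, Set.mem_singleton_iff] at hq hne ⊢
    tauto
  intro p hp
  simp only [Set.mem_insert_iff, Set.mem_singleton_iff] at hp
  rcases hp with rfl | rfl | rfl | rfl
  · exact fun hc => g1 (convexHull_mono sub1 hc)
  · exact fun hc => g2 (convexHull_mono sub2 hc)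
  · exact fun hc => g3 (convexHull_mono sub3 hc)
  · exact fun hc => g4 (convexHull_mono sub4 hc)
end

section
/- Let T be a region on one side of the line through a segment B, and let Q ⊂ T be an antichain with respect to the order p ≺ q iff q ∈ conv(B ∪ {p}). Then for any two distinct points p, q ∈ Q, the line through p and q does not intersect the segment B. -/
theorem det2_smul_add_smul (a b p q : ℝ × ℝ) {s t : ℝ} (hst : s + t = 1) :
    det2 a b (s • p + t • q) = s * det2 a b p + t * det2 a b q := by
  simp only [det2, Prod.fst_add, Prod.snd_add, Prod.smul_fst, Prod.smul_snd, smul_eq_mul]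
  linear_combination (a.2 * (b.1 - a.1) - a.1 * (b.2 - a.2)) * hst

theorem det2_eq_zero_of_mem_segment {a b x : ℝ × ℝ} (hx : x ∈ segment ℝ a b) :
    det2 a b x = 0 := by
  obtain ⟨s, t, -, -, hst, rfl⟩ := hx
  rw [det2_smul_add_smul a b a b hst]
  simp only [det2]
  ring

theorem Convex.det2_preimage {S : Set ℝ} (hS : Convex ℝ S) (a b : ℝ × ℝ) :
    Convex ℝ (det2 a b ⁻¹' S) := by
  intro p hp q hq s t hs ht hst
  simpa only [Set.mem_preimage, det2_smul_add_smul a b p q hst, smul_eq_mul] using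
    hS hp hq hs ht hst

theorem stmt_17_general (a b : ℝ × ℝ) (Q : Finset (ℝ × ℝ))
    (hside : (∀ p ∈ Q, 0 < det2 a b p) ∨ (∀ p ∈ Q, det2 a b p < 0))
    (hanti : ∀ p ∈ Q, ∀ q ∈ Q, p ≠ q → q ∉ convexHull ℝ (segment ℝ a b ∪ {p})) :
    ∀ p ∈ Q, ∀ q ∈ Q, p ≠ q →
      ∀ x ∈ segment ℝ a b, x ∉ affineSpan ℝ ({p, q} : Set (ℝ × ℝ)) := by
  intro p hp q hq hpq x hx hxpq
  obtain ⟨S, hS, h0, hQS⟩ :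
      ∃ S : Set ℝ, Convex ℝ S ∧ (0 : ℝ) ∉ S ∧ ∀ p ∈ Q, det2 a b p ∈ S := by
    rcases hside with h | h
    exacts [⟨Set.Ioi 0, convex_Ioi 0, by simp, h⟩, ⟨Set.Iio 0, convex_Iio 0, by simp, h⟩]
  have hhull : ∀ {y z : ℝ × ℝ}, Wbtw ℝ x y z → y ∈ convexHull ℝ (segment ℝ a b ∪ {z}) :=
    fun {_ z} h => segment_subset_convexHull (Set.mem_union_left _ hx)
      (Set.mem_union_right _ (Set.mem_singleton z)) h.mem_segment
  rcases (collinear_insert_of_mem_affineSpan_pair hxpq).wbtw_or_wbtw_or_wbtw with h | h | h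
  · exact hanti q hq p hp hpq.symm (hhull h)
  · exact hanti p hp q hq hpq (hhull h.symm)
  · have hxS : det2 a b x ∈ S :=
      (hS.det2_preimage a b).segment_subset (hQS q hq) (hQS p hp) h.mem_segment
    exact h0 (det2_eq_zero_of_mem_segment hx ▸ hxS)

/-- If Q is an antichain with respect to p ≺ q iff q ∈ conv(B ∪ {p}) (Q lying strictly
on one side of the line through the segment B = [a,b], in general position with a, b),
then the line through any two distinct points of Q misses the segment B. -/
theorem stmt_17 (a b : ℝ × ℝ) (hab : a ≠ b) (Q : Finset (ℝ × ℝ))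
    (hside : (∀ p ∈ Q, 0 < det2 a b p) ∨ (∀ p ∈ Q, det2 a b p < 0))
    (hgp : GenPos ((Q : Set (ℝ × ℝ)) ∪ {a, b}))
    (hanti : ∀ p ∈ Q, ∀ q ∈ Q, p ≠ q → q ∉ convexHull ℝ (segment ℝ a b ∪ {p})) :
    ∀ p ∈ Q, ∀ q ∈ Q, p ≠ q →
      ∀ x ∈ segment ℝ a b, x ∉ affineSpan ℝ ({p, q} : Set (ℝ × ℝ)) :=
  stmt_17_general a b Q hside hanti
end

section
/- Let B be a segment and Q a finite chain with respect to the order p ≺ q iff q ∈ conv(B ∪ {p}) (all points of Q on one side of the line through B, in general position with B's endpoints). Then for any two distinct points p, q in Q, the line through p and q intersects the segment B. -/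
/-- If Q is a chain with respect to p ≺ q iff p ≠ q and q ∈ conv(B ∪ {p}) (Q lying
strictly on one side of the line through the segment B = [a,b], in general position
with a, b), then the line through any two distinct points of Q meets the segment B. -/
theorem stmt_18 (a b : ℝ × ℝ) (hab : a ≠ b) (Q : Finset (ℝ × ℝ))
    (hside : (∀ p ∈ Q, 0 < det2 a b p) ∨ (∀ p ∈ Q, det2 a b p < 0))
    (hgp : GenPos ((Q : Set (ℝ × ℝ)) ∪ {a, b}))
    (hchain : ∀ p ∈ Q, ∀ q ∈ Q, p ≠ q →
      q ∈ convexHull ℝ (segment ℝ a b ∪ {p}) ∨ p ∈ convexHull ℝ (segment ℝ a b ∪ {q})) :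
    ∀ p ∈ Q, ∀ q ∈ Q, p ≠ q →
      ∃ x ∈ segment ℝ a b, x ∈ affineSpan ℝ ({p, q} : Set (ℝ × ℝ)) := by
  have key : ∀ p q : ℝ × ℝ, p ≠ q → q ∈ convexHull ℝ (segment ℝ a b ∪ {p}) →
      ∃ x ∈ segment ℝ a b, x ∈ affineSpan ℝ ({p, q} : Set (ℝ × ℝ)) := by
    intro p q hpq hmem
    have h1 : convexHull ℝ (segment ℝ a b ∪ {p}) = ⋃ z ∈ segment ℝ a b, segment ℝ p z := by
      conv_lhs => rw [← convexHull_pair]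
      rw [convexHull_convexHull_union_left, Set.union_singleton,
        convexHull_insert ⟨a, by simp⟩, convexHull_pair]
      simp [convexJoin]
    rw [h1] at hmem
    obtain ⟨z, hz, hq'⟩ := Set.mem_iUnion₂.1 hmem
    obtain ⟨u, v, hu, hv, huv, hq2⟩ := hq'
    have hv0 : v ≠ 0 := by
      rintro rfl
      rw [add_zero] at huv
      subst huv
      rw [zero_smul, add_zero, one_smul] at hq2
      exact hpq hq2
    refine ⟨z, hz, ?_⟩
    have hzl : z = AffineMap.lineMap p q (1 / v) := by
      rw [AffineMap.lineMap_apply_module, ← hq2]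
      match_scalars <;> field_simp <;> linarith
    rw [hzl]
    exact AffineMap.lineMap_mem_affineSpan_pair _ _ _
  intro p hp q hq hpq
  rcases hchain p hp q hq hpq with h | h
  · exact key p q hpq h
  · obtain ⟨x, hx, hx2⟩ := key q p hpq.symm h
    exact ⟨x, hx, by rwa [Set.pair_comm] at hx2⟩
end
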